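/- arXiv:1001.2291 — 6 statements merged into one kernel-verified Lean document; each statement's English description precedes it below -/
import Mathlib

section
/- Let Γ be a finite right-resolving labeled graph over a finite alphabet X. Then the minimum over all left-infinite sequences w ∈ X^{-ω} of |V(w)| equals the minimum over all finite words u ∈ X* of |V(u)|. -/
open MeasureTheory ENNReal

/-- The left-infinite sequence `w = ...x₂x₁` (with `w 0 = x₁` the rightmost letter)
ends at the vertex `v` of the `X`-labeled directed graph with edge relation `E`:
there is a left-infinite path `...e₂e₁` ending at `v` whose `i`-th edge is labeled `xᵢ`. -/
def EndsInf {V X : Type*} (E : V → X → V → Prop) (w : ℕ → X) (v : V) : Prop :=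
  ∃ p : ℕ → V, p 0 = v ∧ ∀ i : ℕ, E (p (i + 1)) (w i) (p i)

/-- The finite word `u = xₙ...x₂x₁` (encoded as the list `[x₁, x₂, ..., xₙ]`, head = rightmost
letter) ends at the vertex `v`: some finite path ending at `v` is labeled by `u`. -/
def EndsFin {V X : Type*} (E : V → X → V → Prop) (u : List X) (v : V) : Prop :=
  ∃ p : ℕ → V, p 0 = v ∧ ∀ (i : ℕ) (h : i < u.length), E (p (i + 1)) (u.get ⟨i, h⟩) (p i)

/-- The right-infinite sequence `w = x₁x₂...` (with `w 0 = x₁` the first letter) starts at the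
vertex `v`: there is a right-infinite path starting at `v` labeled by `w`. -/
def StartsInf {V X : Type*} (E : V → X → V → Prop) (w : ℕ → X) (v : V) : Prop :=
  ∃ p : ℕ → V, p 0 = v ∧ ∀ i : ℕ, E (p i) (w i) (p (i + 1))

/-- The graph is right-resolving: the outgoing edges at each vertex have distinct labels. -/
def RightResolving {V X : Type*} (E : V → X → V → Prop) : Prop :=
  ∀ v x u u', E v x u → E v x u' → u = u'

/-- The cylinder subset of `X^{-ω}` (resp. `X^ω`) of sequences whose last (resp. first)
`u.length` letters spell the word `u`. -/
def Cyl {X : Type*} (u : List X) : Set (ℕ → X) :=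
  {w | ∀ (i : ℕ) (h : i < u.length), w i = u.get ⟨i, h⟩}

section Aux
variable {V X : Type*} (E : V → X → V → Prop) (w : ℕ → X)

/-- `v` is reachable by a path of length `n` labeled by `w s, w (s+1), ...` read backwards. -/
def Cpath (s n : ℕ) (v : V) : Prop :=
  ∃ p : ℕ → V, p 0 = v ∧ ∀ i < n, E (p (i + 1)) (w (s + i)) (p i)

lemma Cpath_mono {s m n : ℕ} (hmn : m ≤ n) {v : V} (h : Cpath E w s n v) :
    Cpath E w s m v := by
  obtain ⟨p, hp0, hpE⟩ := h
  exact ⟨p, hp0, fun i hi => hpE i (lt_of_lt_of_le hi hmn)⟩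

lemma Cpath_step [Finite V] {s : ℕ} {v : V} (h : ∀ n, Cpath E w s n v) :
    ∃ v', E v' (w s) v ∧ ∀ n, Cpath E w (s + 1) n v' := by
  choose p hp0 hpE using fun n => h (n + 1)
  obtain ⟨v', hv'⟩ := Finite.exists_infinite_fiber (fun n => p n 1)
  have hinf : ((fun n => p n 1) ⁻¹' {v'}).Infinite := Set.infinite_coe_iff.mp hv'
  have key : ∀ n, p n 1 = v' → Cpath E w (s + 1) n v' := by
    intro n hn
    refine ⟨fun i => p n (i + 1), hn, fun i hi => ?_⟩
    have h2 := hpE n (i + 1) (by omega)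
    convert h2 using 2
    omega
  have hE : E v' (w s) v := by
    obtain ⟨m, hm, _⟩ := hinf.exists_gt 0
    have h2 := hpE m 0 (by omega)
    rw [hp0 m] at h2
    have hm' : p m 1 = v' := hm
    rw [hm'] at h2
    simpa using h2
  refine ⟨v', hE, fun n => ?_⟩
  obtain ⟨m, hm, hnm⟩ := hinf.exists_gt n
  exact Cpath_mono E w (le_of_lt hnm) (key m hm)

lemma endsInf_of_cpath [Finite V] {v : V} (h : ∀ n, Cpath E w 0 n v) : EndsInf E w v := by
  have H : ∀ s (x : V), (∀ n, Cpath E w s n x) →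
      ∃ v', E v' (w s) x ∧ ∀ n, Cpath E w (s + 1) n v' := fun s x hx => Cpath_step E w hx
  choose f hf1 hf2 using H
  let q : ∀ s : ℕ, {x : V // ∀ n, Cpath E w s n x} := fun s =>
    Nat.rec ⟨v, h⟩ (fun s ih => ⟨f s ih.1 ih.2, hf2 s ih.1 ih.2⟩) s
  exact ⟨fun s => (q s).1, rfl, fun i => hf1 i (q i).1 (q i).2⟩

lemma cpath_of_endsInf {v : V} (h : EndsInf E w v) (n : ℕ) : Cpath E w 0 n v := by
  obtain ⟨p, hp0, hpE⟩ := h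
  exact ⟨p, hp0, fun i _ => by simpa using hpE i⟩

lemma exists_stab [Finite V] :
    ∃ N : ℕ, {v : V | EndsInf E w v} = {v : V | Cpath E w 0 N v} := by
  set g : ℕ → ℕ := fun n => {v : V | Cpath E w 0 n v}.ncard with hg
  have hne : (Set.range g).Nonempty := ⟨g 0, 0, rfl⟩
  obtain ⟨N, hN⟩ := Nat.sInf_mem hne
  have hmin : ∀ n, g N ≤ g n := fun n => hN ▸ Nat.sInf_le ⟨n, rfl⟩
  have hstab : ∀ n, N ≤ n → {v : V | Cpath E w 0 n v} = {v : V | Cpath E w 0 N v} := by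
    intro n hn
    refine Set.eq_of_subset_of_ncard_le (fun v hv => Cpath_mono E w hn hv) (hmin n)
      (Set.toFinite _)
  refine ⟨N, Set.Subset.antisymm (fun v hv => cpath_of_endsInf E w hv N) (fun v hv => ?_)⟩
  refine endsInf_of_cpath E w (fun n => ?_)
  rcases le_or_gt n N with hle | hlt
  · exact Cpath_mono E w hle hv
  · rw [← Set.mem_setOf_eq (p := Cpath E w 0 n), hstab n (le_of_lt hlt)]; exact hv

lemma cpath_eq_endsFin (N : ℕ) :
    {v : V | Cpath E w 0 N v} = {v : V | EndsFin E (List.ofFn fun i : Fin N => w i) v} := by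
  ext v
  constructor
  · rintro ⟨p, hp0, hpE⟩
    refine ⟨p, hp0, fun i hi => ?_⟩
    have hi' : i < N := by simpa using hi
    have := hpE i hi'
    simpa using this
  · rintro ⟨p, hp0, hpE⟩
    refine ⟨p, hp0, fun i hi => ?_⟩
    have := hpE i (by simpa using hi)
    simpa using this

end Aux

/-- For a finite right-resolving labeled graph, the minimum of `|V(w)|` over left-infinite
sequences `w` equals the minimum of `|V(u)|` over finite words `u`. -/
theorem stmt_1 {V X : Type*} [Finite V] [Finite X] [Nonempty X]
    (E : V → X → V → Prop) (hrr : RightResolving E) :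
    sInf {k : ℕ | ∃ w : ℕ → X, {v | EndsInf E w v}.ncard = k} =
      sInf {k : ℕ | ∃ u : List X, {v | EndsFin E u v}.ncard = k} := by
  apply le_antisymm
  · -- sInf over infinite ≤ sInf over finite
    have hTne : {k : ℕ | ∃ u : List X, {v | EndsFin E u v}.ncard = k}.Nonempty :=
      ⟨_, ([] : List X), rfl⟩
    obtain ⟨u, hu⟩ := Nat.sInf_mem hTne
    set w : ℕ → X := fun i =>
      if h : i < u.length then u.get ⟨i, h⟩ else Classical.arbitrary X with hw
    have hsub : {v | EndsInf E w v} ⊆ {v | EndsFin E u v} := by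
      rintro v ⟨p, hp0, hpE⟩
      refine ⟨p, hp0, fun i h => ?_⟩
      have := hpE i
      simpa [hw, dif_pos h] using this
    calc sInf {k : ℕ | ∃ w : ℕ → X, {v | EndsInf E w v}.ncard = k}
        ≤ {v | EndsInf E w v}.ncard := Nat.sInf_le ⟨w, rfl⟩
      _ ≤ {v | EndsFin E u v}.ncard := Set.ncard_le_ncard hsub (Set.toFinite _)
      _ = _ := hu
  · -- sInf over finite ≤ sInf over infinite
    have hSne : {k : ℕ | ∃ w : ℕ → X, {v | EndsInf E w v}.ncard = k}.Nonempty :=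
      ⟨_, (fun _ => Classical.arbitrary X), rfl⟩
    obtain ⟨w, hwv⟩ := Nat.sInf_mem hSne
    obtain ⟨N, hN⟩ := exists_stab E w
    have : {v | EndsInf E w v}.ncard
        = {v | EndsFin E (List.ofFn fun i : Fin N => w i) v}.ncard := by
      rw [hN, cpath_eq_endsFin]
    calc sInf {k : ℕ | ∃ u : List X, {v | EndsFin E u v}.ncard = k}
        ≤ {v | EndsFin E (List.ofFn fun i : Fin N => w i) v}.ncard := Nat.sInf_le ⟨_, rfl⟩
      _ = {v | EndsInf E w v}.ncard := this.symm
      _ = _ := hwv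
end

section
/- Let Γ be a finite right-resolving labeled graph over a finite alphabet X, and let k = min over finite words u of |V(u)|. If a left-infinite sequence w ∈ X^{-ω} contains (as a factor) some finite word u₀ with |V(u₀)| = k, then |V(w)| = k. -/
open MeasureTheory ENNReal

/-- If `k` is the minimum of `|V(u)|` over finite words and the left-infinite sequence `w`
contains as a factor a finite word `u₀` with `|V(u₀)| = k`, then `|V(w)| = k`. -/
theorem stmt_3 {V X : Type*} [Finite V] [Finite X] [Nonempty X]
    (E : V → X → V → Prop) (hrr : RightResolving E) (w : ℕ → X) (u₀ : List X)
    (hfac : ∃ m : ℕ, ∀ (i : ℕ) (h : i < u₀.length), w (m + i) = u₀.get ⟨i, h⟩)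
    (hmin : {v | EndsFin E u₀ v}.ncard =
      sInf {k : ℕ | ∃ u : List X, {v | EndsFin E u v}.ncard = k}) :
    {v | EndsInf E w v}.ncard =
      sInf {k : ℕ | ∃ u : List X, {v | EndsFin E u v}.ncard = k} := by
  classical
  obtain ⟨m, hm⟩ := hfac
  set Sk := {k : ℕ | ∃ u : List X, ({v | EndsFin E u v} : Set V).ncard = k} with hSk
  set N := m + u₀.length with hN
  set W : ℕ → List X := fun n => List.ofFn (fun i : Fin n => w i) with hW
  -- convenient characterization of EndsFin for prefixes of w
  have endsW : ∀ (n : ℕ) (v : V), EndsFin E (W n) v ↔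
      ∃ p : ℕ → V, p 0 = v ∧ ∀ i, i < n → E (p (i + 1)) (w i) (p i) := by
    intro n v
    constructor
    · rintro ⟨p, h0, hp⟩
      refine ⟨p, h0, fun i hi => ?_⟩
      have h' : i < (W n).length := by simpa [hW] using hi
      have := hp i h'
      simpa [hW] using this
    · rintro ⟨p, h0, hp⟩
      refine ⟨p, h0, fun i h' => ?_⟩
      have hi : i < n := by simpa [hW] using h'
      have := hp i hi
      simpa [hW] using this
  -- any path having edges up to N passes through V(u₀) at time m
  have toU₀ : ∀ p : ℕ → V, (∀ i, i < N → E (p (i + 1)) (w i) (p i)) →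
      EndsFin E u₀ (p m) := by
    intro p hp
    refine ⟨fun i => p (m + i), rfl, fun i h => ?_⟩
    have h1 : m + i < N := by omega
    have := hp (m + i) h1
    rw [hm i h] at this
    show E (p (m + (i + 1))) (u₀.get ⟨i, h⟩) (p (m + i))
    have e : m + (i + 1) = m + i + 1 := by omega
    rw [e]
    exact this
  -- extending u₀ into the past does not change V(u₀)
  have extEq : ∀ t : List X,
      {v | EndsFin E (u₀ ++ t) v} = {v | EndsFin E u₀ v} := by
    intro t
    have hsub : {v | EndsFin E (u₀ ++ t) v} ⊆ {v | EndsFin E u₀ v} := by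
      rintro v ⟨p, h0, hp⟩
      refine ⟨p, h0, fun i h => ?_⟩
      have h' : i < (u₀ ++ t).length := by
        rw [List.length_append]; omega
      have := hp i h'
      rw [List.get_eq_getElem, List.getElem_append_left h] at this
      rw [List.get_eq_getElem]
      exact this
    have hle : ({v | EndsFin E u₀ v} : Set V).ncard ≤
        ({v | EndsFin E (u₀ ++ t) v} : Set V).ncard := by
      rw [hmin]
      exact Nat.sInf_le ⟨u₀ ++ t, rfl⟩
    exact Set.eq_of_subset_of_ncard_le hsub hle (Set.toFinite _)
  -- the vertex sets of the prefixes stabilize at time N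
  have stepN : ∀ n, N ≤ n →
      {v | EndsFin E (W n) v} = {v | EndsFin E (W N) v} := by
    intro n hn
    apply Set.Subset.antisymm
    · rintro v hv
      rw [Set.mem_setOf_eq, endsW] at hv ⊢
      obtain ⟨p, h0, hp⟩ := hv
      exact ⟨p, h0, fun i hi => hp i (by omega)⟩
    · rintro v hv
      rw [Set.mem_setOf_eq, endsW] at hv
      obtain ⟨p, h0, hp⟩ := hv
      have hpm : EndsFin E u₀ (p m) := toU₀ p hp
      have hpm' : p m ∈ {v | EndsFin E
          (u₀ ++ List.ofFn (fun j : Fin (n - N) => w (N + j))) v} := by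
        rw [extEq]; exact hpm
      set t := List.ofFn (fun j : Fin (n - N) => w (N + j)) with ht
      obtain ⟨q, hq0, hq⟩ := hpm'
      have hlen : (u₀ ++ t).length = n - m := by
        rw [List.length_append, ht, List.length_ofFn]; omega
      have hget : ∀ (i : ℕ) (h : i < (u₀ ++ t).length),
          (u₀ ++ t).get ⟨i, h⟩ = w (m + i) := by
        intro i h
        rw [List.get_eq_getElem]
        rcases lt_or_ge i u₀.length with hi | hi
        · rw [List.getElem_append_left hi]
          have := hm i hi
          rw [List.get_eq_getElem] at this
          exact this.symm
        · have hi2 : i - u₀.length < t.length := by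
            rw [ht, List.length_ofFn]; rw [hlen] at h; omega
          rw [List.getElem_append_right hi]
          have : t[i - u₀.length]'hi2 = w (N + (i - u₀.length)) := by
            simp only [ht, List.getElem_ofFn]
          rw [this]
          congr 1
          omega
      have hr : ∀ j, j ≤ m → (if j < m then p j else q (j - m)) = p j := by
        intro j hj
        rcases lt_or_eq_of_le hj with hj' | hj'
        · rw [if_pos hj']
        · subst hj'
          rw [if_neg (lt_irrefl _), Nat.sub_self, hq0]
      rw [Set.mem_setOf_eq, endsW]
      refine ⟨fun i => if i < m then p i else q (i - m), ?_, ?_⟩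
      · show (if 0 < m then p 0 else q (0 - m)) = v
        rw [hr 0 (Nat.zero_le m), h0]
      · intro i hi
        show E (if i + 1 < m then p (i + 1) else q (i + 1 - m)) (w i)
          (if i < m then p i else q (i - m))
        rcases lt_or_ge i m with him | him
        · rw [hr i (by omega), hr (i + 1) (by omega)]
          exact hp i (by omega)
        · rw [if_neg (by omega : ¬ i < m), if_neg (by omega : ¬ i + 1 < m)]
          have h6 : i - m < (u₀ ++ t).length := by rw [hlen]; omega
          have := hq (i - m) h6
          rw [hget (i - m) h6] at this
          have e1 : m + (i - m) = i := by omega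
          have e2 : i + 1 - m = i - m + 1 := by omega
          rw [e1] at this
          rw [e2]
          exact this
  -- the cardinality at time N is exactly the minimum
  have cardN : ({v | EndsFin E (W N) v} : Set V).ncard = sInf Sk := by
    refine le_antisymm ?_ (Nat.sInf_le ⟨W N, rfl⟩)
    have hle : ({v | EndsFin E (W N) v} : Set V).ncard ≤
        ({v | EndsFin E u₀ v} : Set V).ncard := by
      set f : V → V := fun v =>
        if h : EndsFin E (W N) v then h.choose m else v with hf
      have hmem : ∀ v ∈ {v | EndsFin E (W N) v}, f v ∈ {v | EndsFin E u₀ v} := by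
        intro v hv
        rw [Set.mem_setOf_eq] at hv
        simp only [hf, dif_pos hv]
        obtain ⟨h0, hp⟩ := hv.choose_spec
        refine toU₀ _ (fun i hi => ?_)
        have h' : i < (W N).length := by simpa [hW] using hi
        have := hp i h'
        simpa [hW] using this
      have hinj : Set.InjOn f {v | EndsFin E (W N) v} := by
        intro v₁ h₁ v₂ h₂ hfe
        rw [Set.mem_setOf_eq] at h₁ h₂
        simp only [hf, dif_pos h₁, dif_pos h₂] at hfe
        obtain ⟨h₁0, h₁p⟩ := h₁.choose_spec
        obtain ⟨h₂0, h₂p⟩ := h₂.choose_spec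
        set p₁ := h₁.choose
        set p₂ := h₂.choose
        have key : ∀ j, j ≤ m → p₁ (m - j) = p₂ (m - j) := by
          intro j
          induction j with
          | zero => intro _; simpa using hfe
          | succ j ih =>
            intro hj
            have hj' : j ≤ m := by omega
            have hih := ih hj'
            have hiN : m - (j + 1) < N := by omega
            have e1 : m - (j + 1) + 1 = m - j := by omega
            have hWl : m - (j + 1) < (W N).length := by simpa [hW] using hiN
            have d₁ := h₁p (m - (j + 1)) hWl
            have d₂ := h₂p (m - (j + 1)) hWl
            rw [e1] at d₁ d₂
            rw [hih] at d₁
            exact hrr _ _ _ _ d₁ d₂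
        have := key m le_rfl
        simp only [Nat.sub_self] at this
        rw [h₁0, h₂0] at this
        exact this
      exact Set.ncard_le_ncard_of_injOn f hmem hinj (Set.toFinite _)
    calc ({v | EndsFin E (W N) v} : Set V).ncard
        ≤ ({v | EndsFin E u₀ v} : Set V).ncard := hle
      _ = sInf Sk := hmin
  -- the set of ends of the infinite word equals the set at time N
  have setEq : {v | EndsInf E w v} = {v | EndsFin E (W N) v} := by
    apply Set.Subset.antisymm
    · rintro v ⟨p, h0, hp⟩
      rw [Set.mem_setOf_eq, endsW]
      exact ⟨p, h0, fun i _ => hp i⟩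
    · intro v hv
      have hall : ∀ n : ℕ, ∃ p : ℕ → V, p 0 = v ∧
          ∀ i, i < n → E (p (i + 1)) (w i) (p i) := by
        intro n
        rcases le_or_gt n N with hn | hn
        · rw [Set.mem_setOf_eq, endsW] at hv
          obtain ⟨p, h0, hp⟩ := hv
          exact ⟨p, h0, fun i hi => hp i (by omega)⟩
        · have : v ∈ {v | EndsFin E (W n) v} := by
            rw [stepN n (le_of_lt hn)]; exact hv
          rw [Set.mem_setOf_eq, endsW] at this
          exact this
      letI : TopologicalSpace V := ⊥
      haveI : DiscreteTopology V := ⟨rfl⟩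
      haveI : Fintype V := Fintype.ofFinite V
      set Z : ℕ → Set (ℕ → V) := fun n =>
        {p | p 0 = v ∧ ∀ i, i < n → E (p (i + 1)) (w i) (p i)} with hZ
      have hdec : ∀ n, Z (n + 1) ⊆ Z n := by
        rintro n p ⟨h0, hp⟩
        exact ⟨h0, fun i hi => hp i (by omega)⟩
      have hne : ∀ n, (Z n).Nonempty := by
        intro n
        obtain ⟨p, h0, hp⟩ := hall n
        exact ⟨p, h0, hp⟩
      have hclosed : ∀ n, IsClosed (Z n) := by
        intro n
        have : Z n = ((fun p : ℕ → V => p 0) ⁻¹' {v}) ∩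
            ⋂ (i : ℕ) (_ : i < n),
              (fun p : ℕ → V => (p (i + 1), p i)) ⁻¹' {q | E q.1 (w i) q.2} := by
          ext p
          simp [hZ, Set.mem_iInter]
        rw [this]
        refine IsClosed.inter (IsClosed.preimage (continuous_apply 0)
          (isClosed_discrete _)) ?_
        refine isClosed_iInter fun i => isClosed_iInter fun _ => ?_
        exact IsClosed.preimage
          ((continuous_apply (i + 1)).prodMk (continuous_apply i))
          (isClosed_discrete _)
      have hcpt : IsCompact (Z 0) := (hclosed 0).isCompact
      obtain ⟨p, hp⟩ := IsCompact.nonempty_iInter_of_sequence_nonempty_isCompact_isClosed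
        Z hdec hne hcpt hclosed
      rw [Set.mem_iInter] at hp
      refine ⟨p, (hp 0).1, fun i => ?_⟩
      exact (hp (i + 1)).2 i (by omega)
  rw [setEq, cardN]
end

section
/- Let Γ be a finite right-resolving labeled graph over a finite alphabet X and let μ_p be a Bernoulli measure on X^{-ω} with all letter probabilities strictly positive. Then the set O of left-infinite sequences w with |V(w)| = min_{u ∈ X*} |V(u)| is open and dense in X^{-ω} and has μ_p-measure 1. -/
open MeasureTheory ENNReal

/-!
Because the graph is right-resolving, each letter maps the set of terminal vertices onto a set
that is no larger, so `|V(s ++ u)| ≤ |V(u)|` (the list `s ++ u` is the word `u` extended on the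
right by the letters of `s`). Hence if `u₀` attains the minimum `m`, so does every extension of it,
and every sequence in the cylinder of such a word has `|V(w)| ≤ m`. Conversely, by König's lemma
`V(w)` equals `V(x_N ⋯ x_1)` for `N` large, so `|V(w)| ≥ m` always, and `O` is exactly the union
of the cylinders of minimal words. This makes `O` open, and dense because every cylinder contains
a cylinder `Cyl (s ++ u₀)`. For the measure, a sequence in the complement of `O` cannot have `u₀`
as any of its aligned blocks of length `|u₀|`; the first `n` blocks are independent, so this has
probability at most `(1 - μ (Cyl u₀)) ^ n → 0`.
-/

section Cylinders
variable {X : Type*}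

def wordSuffix (w : ℕ → X) (n : ℕ) : List X := List.ofFn fun i : Fin n => w i

@[simp]
lemma length_wordSuffix (w : ℕ → X) (n : ℕ) : (wordSuffix w n).length = n := List.length_ofFn

lemma cyl_ofFn {n : ℕ} (f : Fin n → X) : Cyl (List.ofFn f) = {w | ∀ i : Fin n, w i = f i} := by
  ext w
  simp only [Cyl, Set.mem_ofPred_eq, List.length_ofFn, List.get_ofFn]
  exact ⟨fun h i => h i i.2, fun h i hi => h ⟨i, hi⟩⟩

lemma cyl_wordSuffix (w : ℕ → X) (n : ℕ) : Cyl (wordSuffix w n) = PiNat.cylinder w n := by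
  ext y
  simp only [wordSuffix, cyl_ofFn, Set.mem_ofPred_eq, PiNat.mem_cylinder_iff]
  exact ⟨fun h i hi => h ⟨i, hi⟩, fun h i => h i i.2⟩

lemma mem_cyl_wordSuffix (w : ℕ → X) (n : ℕ) : w ∈ Cyl (wordSuffix w n) := by
  rw [cyl_wordSuffix]
  exact PiNat.self_mem_cylinder w n

lemma mem_cyl_append {w : ℕ → X} {s u : List X} :
    w ∈ Cyl (s ++ u) ↔ w ∈ Cyl s ∧ (fun i => w (s.length + i)) ∈ Cyl u := by
  simp only [Cyl, Set.mem_ofPred_eq, List.get_eq_getElem, List.length_append]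
  refine ⟨fun h => ⟨fun i hi => ?_, fun i hi => ?_⟩, fun ⟨hs, hu⟩ i hi => ?_⟩
  · rw [h i (by omega), List.getElem_append_left]
  · rw [h _ (by omega), List.getElem_append_right (by omega)]
    simp
  · rcases lt_or_ge i s.length with hi' | hi'
    · rw [hs i hi', List.getElem_append_left]
    · rw [List.getElem_append_right hi', ← hu (i - s.length) (by omega)]
      congr 1
      omega

@[simp]
lemma cyl_nil : Cyl ([] : List X) = Set.univ :=
  Set.eq_univ_of_forall fun _ i hi => absurd hi (Nat.not_lt_zero i)

lemma cyl_nonempty [Nonempty X] (u : List X) : (Cyl u).Nonempty :=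
  ⟨fun i => u.getD i (Classical.arbitrary X), fun i hi => by simp [hi]⟩

lemma isOpen_cyl [TopologicalSpace X] [DiscreteTopology X] (u : List X) : IsOpen (Cyl u) := by
  rw [← List.ofFn_get u, cyl_ofFn, Set.ofPred_forall]
  exact isOpen_iInter_of_finite fun i =>
    (continuous_apply (A := fun _ : ℕ => X) i).isOpen_preimage {u.get i} (isOpen_discrete _)

def block (w : ℕ → X) (L j : ℕ) : Fin L → X := fun i => w (L * j + i)

lemma mem_cyl_wordSuffix_append_ofFn_iff {w : ℕ → X} {L : ℕ} (j : ℕ) (b : Fin L → X) :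
    w ∈ Cyl (wordSuffix w (L * j) ++ List.ofFn b) ↔ block w L j = b := by
  simp only [mem_cyl_append, mem_cyl_wordSuffix, true_and, length_wordSuffix, cyl_ofFn,
    Set.mem_ofPred_eq, funext_iff, block]

end Cylinders

section Graph
variable {V X : Type*} (E : V → X → V → Prop)

lemma endsFin_cons_iff {x : X} {t : List X} {v : V} :
    EndsFin E (x :: t) v ↔ ∃ q, EndsFin E t q ∧ E q x v := by
  constructor
  · rintro ⟨p, rfl, h⟩
    exact ⟨p 1, ⟨fun i => p (i + 1), rfl, fun i hi => by simpa using h (i + 1) (by simpa using hi)⟩,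
      by simpa using h 0 (by simp)⟩
  · rintro ⟨q, ⟨p, rfl, hp⟩, hq⟩
    refine ⟨fun n => Nat.casesOn n v p, rfl, fun i hi => ?_⟩
    cases i with
    | zero => simpa using hq
    | succ i => simpa using hp i (by simpa using hi)

/-- Right-resolving means that each letter acts on vertices as a partial function. -/
lemma ncard_endsFin_cons_le [Finite V] (hrr : RightResolving E) (x : X) (t : List X) :
    {v | EndsFin E (x :: t) v}.ncard ≤ {v | EndsFin E t v}.ncard := by
  classical
  let next : V → V := fun q => if h : ∃ v, E q x v then h.choose else q
  have hsub : {v | EndsFin E (x :: t) v} ⊆ next '' {v | EndsFin E t v} := by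
    intro v hv
    obtain ⟨q, hq, hqv⟩ := (endsFin_cons_iff E).1 hv
    have h : ∃ v, E q x v := ⟨v, hqv⟩
    exact ⟨q, hq, by simpa only [next, dif_pos h] using hrr _ _ _ _ h.choose_spec hqv⟩
  exact (Set.ncard_le_ncard hsub (Set.toFinite _)).trans (Set.ncard_image_le (Set.toFinite _))

lemma ncard_endsFin_append_le [Finite V] (hrr : RightResolving E) (s u : List X) :
    {v | EndsFin E (s ++ u) v}.ncard ≤ {v | EndsFin E u v}.ncard := by
  induction s with
  | nil => rfl
  | cons x s ih => exact (ncard_endsFin_cons_le E hrr x (s ++ u)).trans ih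

lemma endsFin_wordSuffix_iff {w : ℕ → X} {n : ℕ} {v : V} :
    EndsFin E (wordSuffix w n) v ↔ ∃ p : ℕ → V, p 0 = v ∧ ∀ i < n, E (p (i + 1)) (w i) (p i) := by
  simp [EndsFin, wordSuffix]

lemma antitone_endsFin_wordSuffix (w : ℕ → X) :
    Antitone fun n => {v | EndsFin E (wordSuffix w n) v} := by
  intro m n hmn v hv
  obtain ⟨p, hp0, hp⟩ := (endsFin_wordSuffix_iff E).1 hv
  exact (endsFin_wordSuffix_iff E).2 ⟨p, hp0, fun i hi => hp i (hi.trans_le hmn)⟩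

lemma EndsInf.endsFin_of_mem_cyl {E} {w : ℕ → X} {u : List X} {v : V} (h : EndsInf E w v)
    (hw : w ∈ Cyl u) : EndsFin E u v := by
  obtain ⟨p, hp0, hp⟩ := h
  exact ⟨p, hp0, fun i hi => hw i hi ▸ hp i⟩

/-- König's lemma, via compactness of the space of vertex sequences. -/
lemma endsInf_iff_forall_endsFin_wordSuffix [Finite V] {w : ℕ → X} {v : V} :
    EndsInf E w v ↔ ∀ n, EndsFin E (wordSuffix w n) v := by
  refine ⟨fun h n => h.endsFin_of_mem_cyl (mem_cyl_wordSuffix w n), fun h => ?_⟩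
  let _ : TopologicalSpace V := ⊥
  have : DiscreteTopology V := ⟨rfl⟩
  let P : ℕ → Set (ℕ → V) := fun n => {p | p 0 = v ∧ ∀ i < n, E (p (i + 1)) (w i) (p i)}
  have hedge : ∀ i, IsClosed {p : ℕ → V | E (p (i + 1)) (w i) (p i)} := fun i =>
    (isClosed_discrete {q : V × V | E q.1 (w i) q.2}).preimage
      ((continuous_apply (A := fun _ : ℕ => V) (i + 1)).prodMk (continuous_apply i))
  have hclosed : ∀ n, IsClosed (P n) := fun n => by
    simp only [P, Set.ofPred_and, Set.ofPred_forall]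
    exact ((isClosed_discrete {v}).preimage (continuous_apply (A := fun _ : ℕ => V) 0)).inter
      (isClosed_iInter fun i => isClosed_iInter fun _ => hedge i)
  obtain ⟨p, hp⟩ := (hclosed 0).isCompact.nonempty_iInter_of_sequence_nonempty_isCompact_isClosed P
    (fun n p hp => ⟨hp.1, fun i hi => hp.2 i (hi.trans n.lt_succ_self)⟩)
    (fun n => (endsFin_wordSuffix_iff E).1 (h n)) hclosed
  simp only [Set.mem_iInter] at hp
  exact ⟨p, (hp 0).1, fun i => (hp (i + 1)).2 i i.lt_succ_self⟩

lemma exists_endsFin_wordSuffix_eq [Finite V] (w : ℕ → X) :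
    ∃ N, {v | EndsFin E (wordSuffix w N) v} = {v | EndsInf E w v} := by
  obtain ⟨N, hN⟩ := WellFoundedLT.antitone_chain_condition (antitone_endsFin_wordSuffix E w)
  refine ⟨N, Set.ext fun v => ⟨fun hv => (endsInf_iff_forall_endsFin_wordSuffix E).2 fun n => ?_,
    fun hv => (endsInf_iff_forall_endsFin_wordSuffix E).1 hv N⟩⟩
  rcases le_total N n with h | h
  · exact (hN n h).subset hv
  · exact antitone_endsFin_wordSuffix E w h hv

end Graph

section Bernoulli
variable {X : Type*} [MeasurableSpace X] {p : X → ℝ≥0∞} {μ : Measure (ℕ → X)}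

lemma measure_cyl_ofFn (hμ : ∀ u : List X, μ (Cyl u) = (u.map p).prod) {n : ℕ} (f : Fin n → X) :
    μ {w | ∀ i : Fin n, w i = f i} = ∏ i, p (f i) := by
  rw [← cyl_ofFn, hμ, List.map_ofFn, List.prod_ofFn]
  rfl

variable [Fintype X]

/-- Cover by the cylinders of the words of length `n * L` whose first `n` blocks all differ
from `b`; the sum of their weights factors over the blocks. -/
lemma measure_forall_block_ne_le (hμ : ∀ u : List X, μ (Cyl u) = (u.map p).prod)
    (hp1 : ∑ x, p x = 1) {L : ℕ} (b : Fin L → X) (n : ℕ) :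
    μ {w | ∀ j : Fin n, block w L j ≠ b} ≤ (1 - ∏ i, p (b i)) ^ n := by
  classical
  let e : Fin n × Fin L ≃ Fin (n * L) := finProdFinEquiv
  let flat : (Fin n → Fin L → X) → Fin (n * L) → X := fun g k => g (e.symm k).1 (e.symm k).2
  let G := Fintype.piFinset fun _ : Fin n => Finset.univ.erase b
  have hcover : {w | ∀ j : Fin n, block w L j ≠ b} ⊆
      ⋃ g ∈ G, {w | ∀ k : Fin (n * L), w k = flat g k} := by
    intro w hw
    refine Set.mem_biUnion (x := fun j : Fin n => block w L j) (by simpa [G] using hw) fun k => ?_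
    have hk : (k : ℕ) = L * (e.symm k).1 + (e.symm k).2 := by
      conv_lhs => rw [← e.apply_symm_apply k]
      simp only [e, finProdFinEquiv_apply_val]
      ring
    simp only [flat, block, ← hk]
  have hrest : ∑ c ∈ Finset.univ.erase b, ∏ i, p (c i) = 1 - ∏ i, p (b i) := by
    have hsum : ∑ c ∈ Finset.univ.erase b, ∏ i, p (c i) + ∏ i, p (b i) = 1 := by
      rw [Finset.sum_erase_add _ _ (Finset.mem_univ b), ← Fintype.sum_pow, hp1, one_pow]
    exact ENNReal.eq_sub_of_add_eq (ne_top_of_le_ne_top one_ne_top (hsum ▸ le_add_self)) hsum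
  calc μ {w | ∀ j : Fin n, block w L j ≠ b}
      ≤ ∑ g ∈ G, μ {w | ∀ k : Fin (n * L), w k = flat g k} :=
        (measure_mono hcover).trans (measure_biUnion_finset_le _ _)
    _ = ∑ g ∈ G, ∏ j, ∏ i, p (g j i) := by
        refine Finset.sum_congr rfl fun g _ => ?_
        rw [measure_cyl_ofFn hμ, ← e.prod_comp, Fintype.prod_prod_type]
        simp [flat]
    _ = _ := by
        rw [← hrest, ← Fin.prod_const, Finset.prod_univ_sum]

lemma measure_forall_block_ne_eq_zero (hμ : ∀ u : List X, μ (Cyl u) = (u.map p).prod)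
    (hp : ∀ x, p x ≠ 0) (hp1 : ∑ x, p x = 1) {L : ℕ} (b : Fin L → X) :
    μ {w | ∀ j, block w L j ≠ b} = 0 := by
  have hr : 1 - ∏ i, p (b i) < 1 :=
    ENNReal.sub_lt_self one_ne_top one_ne_zero (Finset.prod_ne_zero_iff.2 fun i _ => hp _)
  refine le_antisymm (ge_of_tendsto' (ENNReal.tendsto_pow_atTop_nhds_zero_of_lt_one hr)
    fun n => ?_) bot_le
  refine (measure_mono ?_).trans (measure_forall_block_ne_le hμ hp1 b n)
  intro w hw j
  exact hw j

end Bernoulli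

section MinEndCount
variable {V X : Type*} (E : V → X → V → Prop)

noncomputable def minEndCount : ℕ := sInf {k : ℕ | ∃ u : List X, {v | EndsFin E u v}.ncard = k}

lemma minEndCount_le (u : List X) : minEndCount E ≤ {v | EndsFin E u v}.ncard :=
  Nat.sInf_le ⟨u, rfl⟩

lemma exists_ncard_endsFin_eq_minEndCount :
    ∃ u : List X, {v | EndsFin E u v}.ncard = minEndCount E :=
  Nat.sInf_mem (s := {k : ℕ | ∃ u : List X, {v | EndsFin E u v}.ncard = k}) ⟨_, [], rfl⟩

variable [Finite V]

lemma cyl_subset_of_ncard_endsFin_eq {u : List X}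
    (hu : {v | EndsFin E u v}.ncard = minEndCount E) :
    Cyl u ⊆ {w | {v | EndsInf E w v}.ncard = minEndCount E} := by
  intro w hw
  obtain ⟨N, hN⟩ := exists_endsFin_wordSuffix_eq E w
  refine le_antisymm ?_ (hN ▸ minEndCount_le E _)
  exact hu ▸ Set.ncard_le_ncard (fun v hv => EndsInf.endsFin_of_mem_cyl hv hw) (Set.toFinite _)

lemma setOf_ncard_endsInf_eq_iUnion :
    {w : ℕ → X | {v | EndsInf E w v}.ncard = minEndCount E} =
      ⋃ (u : List X) (_ : {v | EndsFin E u v}.ncard = minEndCount E), Cyl u := by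
  refine subset_antisymm (fun w hw => ?_)
    (Set.iUnion₂_subset fun u hu => cyl_subset_of_ncard_endsFin_eq E hu)
  obtain ⟨N, hN⟩ := exists_endsFin_wordSuffix_eq E w
  have hN' : {v | EndsFin E (wordSuffix w N) v}.ncard = minEndCount E := hN ▸ hw
  exact Set.mem_iUnion₂.2 ⟨wordSuffix w N, hN', mem_cyl_wordSuffix w N⟩

lemma isOpen_setOf_ncard_endsInf_eq [TopologicalSpace X] [DiscreteTopology X] :
    IsOpen {w : ℕ → X | {v | EndsInf E w v}.ncard = minEndCount E} := by
  rw [setOf_ncard_endsInf_eq_iUnion]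
  exact isOpen_biUnion fun u _ => isOpen_cyl u

variable {E}

lemma cyl_append_subset_of_ncard_endsFin_eq (hrr : RightResolving E) (s : List X) {u : List X}
    (hu : {v | EndsFin E u v}.ncard = minEndCount E) :
    Cyl (s ++ u) ⊆ {w | {v | EndsInf E w v}.ncard = minEndCount E} :=
  cyl_subset_of_ncard_endsFin_eq E <|
    le_antisymm (hu ▸ ncard_endsFin_append_le E hrr s u) (minEndCount_le E _)

lemma dense_setOf_ncard_endsInf_eq [TopologicalSpace X] [DiscreteTopology X]
    (hrr : RightResolving E) :
    Dense {w : ℕ → X | {v | EndsInf E w v}.ncard = minEndCount E} := by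
  obtain ⟨u, hu⟩ := exists_ncard_endsFin_eq_minEndCount E
  refine (PiNat.isTopologicalBasis_cylinders fun _ => X).dense_iff.2 ?_
  rintro _ ⟨x, n, rfl⟩ -
  have : Nonempty X := ⟨x 0⟩
  obtain ⟨w, hw⟩ := cyl_nonempty (wordSuffix x n ++ u)
  refine ⟨w, ?_, cyl_append_subset_of_ncard_endsFin_eq hrr _ hu hw⟩
  exact cyl_wordSuffix x n ▸ (mem_cyl_append.1 hw).1

lemma measure_setOf_ncard_endsInf_eq [Fintype X] [MeasurableSpace X] (hrr : RightResolving E)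
    {p : X → ℝ≥0∞} {μ : Measure (ℕ → X)} (hμ : ∀ u : List X, μ (Cyl u) = (u.map p).prod)
    (hp : ∀ x, p x ≠ 0) (hp1 : ∑ x, p x = 1) :
    μ {w : ℕ → X | {v | EndsInf E w v}.ncard = minEndCount E} = 1 := by
  obtain ⟨u, hu⟩ := exists_ncard_endsFin_eq_minEndCount E
  have hcompl : {w : ℕ → X | {v | EndsInf E w v}.ncard = minEndCount E}ᶜ ⊆
      {w | ∀ j, block w u.length j ≠ u.get} := by
    intro w hw j hj
    rw [← mem_cyl_wordSuffix_append_ofFn_iff, List.ofFn_get] at hj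
    exact hw (cyl_append_subset_of_ncard_endsFin_eq hrr _ hu hj)
  have hnull := measure_mono_null hcompl (measure_forall_block_ne_eq_zero hμ hp hp1 u.get)
  rw [measure_congr (ae_eq_univ.2 hnull), ← cyl_nil, hμ]
  rfl

end MinEndCount

theorem stmt_4_general {V X : Type*} [Finite V] [Fintype X]
    [TopologicalSpace X] [DiscreteTopology X] [MeasurableSpace X]
    (E : V → X → V → Prop) (hrr : RightResolving E)
    (p : X → ℝ≥0∞) (hp : ∀ x, p x ≠ 0) (hp1 : ∑ x, p x = 1)
    (μ : Measure (ℕ → X)) (hμ : ∀ u : List X, μ (Cyl u) = (u.map p).prod) :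
    IsOpen {w : ℕ → X | {v | EndsInf E w v}.ncard =
        sInf {k : ℕ | ∃ u : List X, {v | EndsFin E u v}.ncard = k}} ∧
    Dense {w : ℕ → X | {v | EndsInf E w v}.ncard =
        sInf {k : ℕ | ∃ u : List X, {v | EndsFin E u v}.ncard = k}} ∧
    μ {w : ℕ → X | {v | EndsInf E w v}.ncard =
        sInf {k : ℕ | ∃ u : List X, {v | EndsFin E u v}.ncard = k}} = 1 :=
  ⟨isOpen_setOf_ncard_endsInf_eq E, dense_setOf_ncard_endsInf_eq hrr,
    measure_setOf_ncard_endsInf_eq hrr hμ hp hp1⟩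

/-- For a finite right-resolving labeled graph and a Bernoulli measure `μ` on `X^{-ω}` with
strictly positive letter probabilities `p`, the set `O` of left-infinite sequences `w` with
`|V(w)| = min_{u ∈ X*} |V(u)|` is open, dense, and has measure `1`. -/
theorem stmt_4 {V X : Type*} [Finite V] [Fintype X] [Nonempty X]
    [TopologicalSpace X] [DiscreteTopology X] [MeasurableSpace X]
    (E : V → X → V → Prop) (hrr : RightResolving E)
    (p : X → ℝ≥0∞) (hp : ∀ x, p x ≠ 0) (hp1 : ∑ x, p x = 1)
    (μ : Measure (ℕ → X)) (hμ : ∀ u : List X, μ (Cyl u) = (u.map p).prod) :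
    IsOpen {w : ℕ → X | {v | EndsInf E w v}.ncard =
        sInf {k : ℕ | ∃ u : List X, {v | EndsFin E u v}.ncard = k}} ∧
    Dense {w : ℕ → X | {v | EndsInf E w v}.ncard =
        sInf {k : ℕ | ∃ u : List X, {v | EndsFin E u v}.ncard = k}} ∧
    μ {w : ℕ → X | {v | EndsInf E w v}.ncard =
        sInf {k : ℕ | ∃ u : List X, {v | EndsFin E u v}.ncard = k}} = 1 :=
  stmt_4_general E hrr p hp hp1 μ hμ
end

section
/- Let Γ be a finite right-resolving labeled graph over a finite alphabet X with adjacency matrix A. For the uniform Bernoulli measure μ_u, if the vector (μ_u(B_v))_v is nonzero, it is a right eigenvector of A with eigenvalue |X|, and if (μ_u(F_v))_v is nonzero, it is a left eigenvector of A with eigenvalue |X|. -/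
open MeasureTheory ENNReal

/-!
Write `κ = |X|` and let `W_n(v)` be the set of words of length `n` labelling paths from `v`.
The cylinder over `W_n(v)` has measure `|W_n(v)| κ⁻ⁿ`, these cylinders decrease in `n`, and by
Kőnig's lemma their intersection is `B_v`, so `μ(B_v) = lim |W_n(v)| κ⁻ⁿ`. Splitting off the first
edge gives `|W_{n+1}(v)| ≤ ∑_u a_{vu} |W_n(u)|`, with equality for a right-resolving graph; in the
limit this is the right eigenvector equation. Read from their right end, left-infinite words
ending at `u` are the words starting at `u` in the reversed graph, which only yields
`κ μ(F_u) ≤ ∑_v a_{vu} μ(F_v)`. Summing over `u`, and using that a right-resolving graph has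
out-degrees `∑_u a_{vu} ≤ κ`, forces equality in each of these inequalities.
-/

theorem MeasureTheory.nullMeasurableSet_of_measure_add_measure_compl_le {α : Type*}
    [MeasurableSpace α] {μ : Measure α} [IsFiniteMeasure μ] {s : Set α}
    (h : μ s + μ sᶜ ≤ μ Set.univ) : NullMeasurableSet s μ := by
  set t := toMeasurable μ s
  set t' := toMeasurable μ sᶜ
  have hcover : t ∪ t' = Set.univ := by
    refine Set.eq_univ_of_forall fun x => ?_
    by_cases hx : x ∈ s
    · exact Or.inl (subset_toMeasurable μ s hx)
    · exact Or.inr (subset_toMeasurable μ sᶜ hx)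
  have hnull : μ (t ∩ t') = 0 := by
    have hadd := measure_union_add_inter (μ := μ) t (measurableSet_toMeasurable μ sᶜ)
    rw [hcover, measure_toMeasurable, measure_toMeasurable] at hadd
    refine le_zero_iff.mp ((ENNReal.add_le_add_iff_left (measure_ne_top μ Set.univ)).mp ?_)
    rw [hadd, add_zero]
    exact h
  refine (measurableSet_toMeasurable μ s).nullMeasurableSet.congr (ae_eq_set.mpr ⟨?_, ?_⟩)
  · exact measure_mono_null (fun x hx => Set.mem_inter hx.1 (subset_toMeasurable μ sᶜ hx.2)) hnull
  · rw [Set.sdiff_eq_empty.mpr (subset_toMeasurable μ s), measure_empty]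

theorem ENNReal.eq_of_forall_le_of_sum_le {ι : Type*} {s : Finset ι} {f g : ι → ℝ≥0∞}
    (hle : ∀ i ∈ s, f i ≤ g i) (hsum : ∑ i ∈ s, g i ≤ ∑ i ∈ s, f i)
    (hfin : ∑ i ∈ s, f i ≠ ∞) {i : ι} (hi : i ∈ s) : f i = g i := by
  classical
  have hrest : ∑ j ∈ s.erase i, f j ≠ ∞ :=
    ne_top_of_le_ne_top hfin (Finset.sum_le_sum_of_subset (Finset.erase_subset i s))
  refine le_antisymm (hle i hi) ((ENNReal.add_le_add_iff_right hrest).mp ?_)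
  calc g i + ∑ j ∈ s.erase i, f j ≤ g i + ∑ j ∈ s.erase i, g j := by
        gcongr with j hj
        exact hle j (Finset.mem_of_mem_erase hj)
    _ = ∑ j ∈ s, g j := Finset.add_sum_erase s g hi
    _ ≤ ∑ j ∈ s, f j := hsum
    _ = f i + ∑ j ∈ s.erase i, f j := (Finset.add_sum_erase s f hi).symm

section Cylinder

variable {X : Type*} {n : ℕ}

def cylSet (s : Finset (Fin n → X)) : Set (ℕ → X) :=
  {w | (fun i : Fin n => w i) ∈ s}

lemma cylSet_singleton (f : Fin n → X) : cylSet {f} = Cyl (List.ofFn f) := by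
  ext w
  simp [cylSet, Cyl, funext_iff, Fin.forall_iff]

lemma cylSet_eq_biUnion (s : Finset (Fin n → X)) : cylSet s = ⋃ f ∈ s, cylSet {f} := by
  ext w
  simp [cylSet]

lemma compl_cylSet [Fintype X] [DecidableEq X] (s : Finset (Fin n → X)) :
    (cylSet s)ᶜ = cylSet sᶜ := by
  ext w
  simp [cylSet]

lemma card_add_card_compl_mul_inv_pow [Fintype X] [Nonempty X] [DecidableEq X]
    (s : Finset (Fin n → X)) :
    ((s.card + sᶜ.card : ℕ) : ℝ≥0∞) * (Fintype.card X : ℝ≥0∞)⁻¹ ^ n = 1 := by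
  rw [Finset.card_add_card_compl, Fintype.card_fun, Fintype.card_fin, Nat.cast_pow, ← mul_pow,
    ENNReal.mul_inv_cancel (by simp) (natCast_ne_top _), one_pow]

variable [Fintype X] [MeasurableSpace X] {μ : Measure (ℕ → X)}
  (hμ : ∀ u : List X, μ (Cyl u) = (Fintype.card X : ℝ≥0∞)⁻¹ ^ u.length)
include hμ

lemma isProbabilityMeasure_of_measure_cyl : IsProbabilityMeasure μ :=
  ⟨by simpa [Cyl] using hμ []⟩

lemma measure_cylSet_le (s : Finset (Fin n → X)) :
    μ (cylSet s) ≤ s.card * (Fintype.card X : ℝ≥0∞)⁻¹ ^ n := by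
  rw [cylSet_eq_biUnion]
  refine (measure_biUnion_finset_le s _).trans_eq ?_
  simp [cylSet_singleton, hμ]

variable [Nonempty X]

-- Cylinders need not be measurable; additivity comes from `μ univ = 1` and subadditivity.
lemma measure_cylSet (s : Finset (Fin n → X)) :
    μ (cylSet s) = s.card * (Fintype.card X : ℝ≥0∞)⁻¹ ^ n := by
  classical
  refine le_antisymm (measure_cylSet_le hμ s) ?_
  have hfin : (sᶜ.card : ℝ≥0∞) * (Fintype.card X : ℝ≥0∞)⁻¹ ^ n ≠ ∞ :=
    mul_ne_top (natCast_ne_top _) (pow_ne_top (by simp))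
  refine (ENNReal.add_le_add_iff_right hfin).mp ?_
  calc (s.card : ℝ≥0∞) * (Fintype.card X : ℝ≥0∞)⁻¹ ^ n
        + sᶜ.card * (Fintype.card X : ℝ≥0∞)⁻¹ ^ n = μ Set.univ := by
        rw [← add_mul, ← Nat.cast_add, card_add_card_compl_mul_inv_pow,
          (isProbabilityMeasure_of_measure_cyl hμ).measure_univ]
    _ ≤ μ (cylSet s) + μ (cylSet s)ᶜ := measure_univ_le_add_compl _
    _ ≤ μ (cylSet s) + sᶜ.card * (Fintype.card X : ℝ≥0∞)⁻¹ ^ n := by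
        rw [compl_cylSet]
        gcongr
        exact measure_cylSet_le hμ sᶜ

lemma nullMeasurableSet_cylSet (s : Finset (Fin n → X)) : NullMeasurableSet (cylSet s) μ := by
  classical
  have := isProbabilityMeasure_of_measure_cyl hμ
  refine nullMeasurableSet_of_measure_add_measure_compl_le (le_of_eq ?_)
  rw [compl_cylSet, measure_cylSet hμ, measure_cylSet hμ, ← add_mul, ← Nat.cast_add,
    card_add_card_compl_mul_inv_pow, measure_univ]

lemma card_mul_measure_cylSet_succ (s : Finset (Fin (n + 1) → X)) :
    (Fintype.card X : ℝ≥0∞) * μ (cylSet s) = s.card * (Fintype.card X : ℝ≥0∞)⁻¹ ^ n := by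
  rw [measure_cylSet hμ, pow_succ', mul_left_comm, ← mul_assoc (Fintype.card X : ℝ≥0∞),
    ENNReal.mul_inv_cancel (by simp) (natCast_ne_top _), one_mul]

end Cylinder

theorem exists_path_of_forall_exists_path_fin {V : Type*} [Finite V] (R : ℕ → V → V → Prop)
    (v : V) (h : ∀ n, ∃ p : Fin (n + 1) → V, p 0 = v ∧ ∀ i : Fin n, R i (p i.castSucc) (p i.succ)) :
    ∃ p : ℕ → V, p 0 = v ∧ ∀ i, R i (p i) (p (i + 1)) := by
  let α : ℕ → Type _ := fun n =>
    {p : Fin (n + 1) → V // p 0 = v ∧ ∀ i : Fin n, R i (p i.castSucc) (p i.succ)}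
  have : ∀ n, Nonempty (α n) := fun n => let ⟨p, hp⟩ := h n; ⟨⟨p, hp⟩⟩
  let π : {i j : ℕ} → i ≤ j → α j → α i := fun hij p =>
    ⟨fun k => p.1 (Fin.castLE (by omega) k), p.2.1, fun k => by
      simpa using p.2.2 (Fin.castLE hij k)⟩
  obtain ⟨f, hf⟩ := exists_seq_forall_proj_of_forall_finite π (fun _ _ => rfl)
    (fun _ _ _ _ _ _ => rfl) (fun _ _ => Set.toFinite _)
  refine ⟨fun k => (f k).1 (Fin.last k), (f 0).2.1, fun k => ?_⟩
  have hprev : (f (k + 1)).1 (Fin.last k).castSucc = (f k).1 (Fin.last k) :=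
    congrArg (fun p : α k => p.1 (Fin.last k)) (hf (Nat.le_succ k))
  simpa [hprev] using (f (k + 1)).2.2 (Fin.last k)

section PathLabels

variable {V X : Type*} [Fintype X] (R : V → X → V → Prop)

open scoped Classical in
noncomputable def pathLabels (n : ℕ) (v : V) : Finset (Fin n → X) :=
  {f | ∃ p : Fin (n + 1) → V, p 0 = v ∧ ∀ i : Fin n, R (p i.castSucc) (f i) (p i.succ)}

variable {R}

lemma mem_pathLabels {n : ℕ} {v : V} {f : Fin n → X} :
    f ∈ pathLabels R n v ↔
      ∃ p : Fin (n + 1) → V, p 0 = v ∧ ∀ i : Fin n, R (p i.castSucc) (f i) (p i.succ) := by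
  simp [pathLabels]

lemma mem_pathLabels_succ {n : ℕ} {v : V} {f : Fin (n + 1) → X} :
    f ∈ pathLabels R (n + 1) v ↔ ∃ u, R v (f 0) u ∧ Fin.tail f ∈ pathLabels R n u := by
  simp only [mem_pathLabels]
  constructor
  · rintro ⟨p, rfl, hp⟩
    refine ⟨p 1, hp 0, Fin.tail p, rfl, fun i => ?_⟩
    simpa only [Fin.tail, Fin.succ_castSucc] using hp i.succ
  · rintro ⟨u, hvu, q, rfl, hq⟩
    refine ⟨Fin.cons v q, rfl, fun i => ?_⟩
    cases i using Fin.cases with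
    | zero => simpa using hvu
    | succ j => simpa [Fin.tail] using hq j

lemma mem_cylSet_pathLabels {n : ℕ} {v : V} {w : ℕ → X} :
    w ∈ cylSet (pathLabels R n v) ↔
      ∃ p : Fin (n + 1) → V, p 0 = v ∧ ∀ i : Fin n, R (p i.castSucc) (w i) (p i.succ) :=
  mem_pathLabels

lemma antitone_cylSet_pathLabels (v : V) :
    Antitone fun n => cylSet (pathLabels R n v) := by
  refine antitone_nat_of_succ_le fun n w hw => ?_
  obtain ⟨p, hp0, hp⟩ := mem_cylSet_pathLabels.mp hw
  exact mem_cylSet_pathLabels.mpr ⟨fun i => p i.castSucc, hp0, fun i => by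
    simpa only [Fin.succ_castSucc, Fin.val_castSucc] using hp i.castSucc⟩

lemma setOf_startsInf_eq_iInter [Finite V] (v : V) :
    {w | StartsInf R w v} = ⋂ n, cylSet (pathLabels R n v) := by
  ext w
  simp only [Set.mem_ofPred_eq, Set.mem_iInter, mem_cylSet_pathLabels]
  constructor
  · rintro ⟨p, hp0, hp⟩ n
    exact ⟨fun i => p i, hp0, fun i => hp i⟩
  · exact exists_path_of_forall_exists_path_fin (fun i a b => R a (w i) b) v

open scoped Classical in
lemma pathLabels_succ [Fintype V] (n : ℕ) (v : V) :
    pathLabels R (n + 1) v = ({q : X × V | R v q.1 q.2} : Finset (X × V)).biUnion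
      fun q => (pathLabels R n q.2).image (Fin.cons q.1) := by
  ext f
  simp only [mem_pathLabels_succ, Finset.mem_biUnion, Finset.mem_image, Finset.mem_filter,
    Finset.mem_univ, true_and, Prod.exists]
  constructor
  · rintro ⟨u, hvu, hf⟩
    exact ⟨f 0, u, hvu, Fin.tail f, hf, Fin.cons_self_tail f⟩
  · rintro ⟨x, u, hvu, g, hg, rfl⟩
    exact ⟨u, by simpa using hvu, by simpa using hg⟩

lemma sum_filter_edge_eq_sum_ncard_mul [Fintype V] {v : V} [DecidablePred fun q : X × V => R v q.1 q.2]
    (g : V → ℕ) :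
    ∑ q ∈ ({q : X × V | R v q.1 q.2} : Finset (X × V)), g q.2
      = ∑ u, {x : X | R v x u}.ncard * g u := by
  rw [Finset.sum_filter, Fintype.sum_prod_type_right]
  refine Finset.sum_congr rfl fun u _ => ?_
  classical
  simp [Finset.sum_ite, Set.ncard_eq_toFinset_card']

lemma card_pathLabels_succ_le [Fintype V] (n : ℕ) (v : V) :
    (pathLabels R (n + 1) v).card ≤ ∑ u, {x : X | R v x u}.ncard * (pathLabels R n u).card := by
  classical
  rw [pathLabels_succ, ← sum_filter_edge_eq_sum_ncard_mul]
  refine Finset.card_biUnion_le.trans (Finset.sum_le_sum fun q _ => ?_)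
  exact Finset.card_image_le

lemma card_pathLabels_succ [Fintype V] (hR : RightResolving R) (n : ℕ) (v : V) :
    (pathLabels R (n + 1) v).card = ∑ u, {x : X | R v x u}.ncard * (pathLabels R n u).card := by
  classical
  rw [pathLabels_succ, ← sum_filter_edge_eq_sum_ncard_mul, Finset.card_biUnion]
  · exact Finset.sum_congr rfl fun q _ =>
      Finset.card_image_of_injective _ (Fin.cons_right_injective (α := fun _ => X) q.1)
  · rintro ⟨x, u⟩ hxu ⟨x', u'⟩ hxu' hne
    simp only [Finset.coe_filter, Finset.mem_univ, true_and, Set.mem_ofPred_eq] at hxu hxu'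
    refine Finset.disjoint_left.mpr fun f hf hf' => hne ?_
    obtain ⟨g, -, rfl⟩ := Finset.mem_image.mp hf
    obtain ⟨g', -, heq⟩ := Finset.mem_image.mp hf'
    obtain rfl : x' = x := by simpa using congrFun heq 0
    rw [hR v x' u u' hxu hxu']

lemma sum_ncard_le_card [Fintype V] (hR : RightResolving R) (v : V) :
    ∑ u, {x : X | R v x u}.ncard ≤ Fintype.card X := by
  classical
  calc ∑ u, {x : X | R v x u}.ncard = ∑ u, ({x | R v x u} : Finset X).card := by
        simp [Set.ncard_eq_toFinset_card']
    _ = (Finset.univ.biUnion fun u => ({x | R v x u} : Finset X)).card := by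
        refine (Finset.card_biUnion fun u _ u' _ hne => ?_).symm
        exact Finset.disjoint_filter.mpr fun x _ hxu hxu' => hne (hR v x u u' hxu hxu')
    _ ≤ Fintype.card X := Finset.card_le_univ _

end PathLabels

section Eigen

open Filter Topology

variable {V X : Type*} [Fintype V] [Fintype X] [Nonempty X] [MeasurableSpace X]
  {μ : Measure (ℕ → X)}
  (hμ : ∀ u : List X, μ (Cyl u) = (Fintype.card X : ℝ≥0∞)⁻¹ ^ u.length)
include hμ

lemma tendsto_measure_cylSet_pathLabels (R : V → X → V → Prop) (v : V) :
    Tendsto (fun n => μ (cylSet (pathLabels R n v))) atTop (𝓝 (μ {w | StartsInf R w v})) := by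
  have := isProbabilityMeasure_of_measure_cyl hμ
  rw [setOf_startsInf_eq_iInter]
  exact tendsto_measure_iInter_atTop (fun n => nullMeasurableSet_cylSet hμ _)
    (antitone_cylSet_pathLabels v) ⟨0, measure_ne_top μ _⟩

lemma sum_ncard_mul_measure_cylSet_pathLabels (R : V → X → V → Prop) (n : ℕ) (v : V) :
    ∑ u, ({x : X | R v x u}.ncard : ℝ≥0∞) * μ (cylSet (pathLabels R n u))
      = ((∑ u, {x : X | R v x u}.ncard * (pathLabels R n u).card : ℕ) : ℝ≥0∞)
        * (Fintype.card X : ℝ≥0∞)⁻¹ ^ n := by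
  simp only [measure_cylSet hμ, Nat.cast_sum, Nat.cast_mul, Finset.sum_mul, mul_assoc]

lemma tendsto_card_mul_measure_cylSet_pathLabels_succ (R : V → X → V → Prop) (v : V) :
    Tendsto (fun n => (Fintype.card X : ℝ≥0∞) * μ (cylSet (pathLabels R (n + 1) v))) atTop
      (𝓝 ((Fintype.card X : ℝ≥0∞) * μ {w | StartsInf R w v})) :=
  ENNReal.Tendsto.const_mul
    ((tendsto_measure_cylSet_pathLabels hμ R v).comp (tendsto_add_atTop_nat 1))
    (Or.inr (natCast_ne_top _))

lemma tendsto_sum_ncard_mul_measure_cylSet_pathLabels (R : V → X → V → Prop) (v : V) :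
    Tendsto (fun n => ∑ u, ({x : X | R v x u}.ncard : ℝ≥0∞) * μ (cylSet (pathLabels R n u)))
      atTop (𝓝 (∑ u, ({x : X | R v x u}.ncard : ℝ≥0∞) * μ {w | StartsInf R w u})) :=
  tendsto_finsetSum _ fun u _ =>
    ENNReal.Tendsto.const_mul (tendsto_measure_cylSet_pathLabels hμ R u)
      (Or.inr (natCast_ne_top _))

lemma card_mul_measure_startsInf_le (R : V → X → V → Prop) (v : V) :
    (Fintype.card X : ℝ≥0∞) * μ {w | StartsInf R w v}
      ≤ ∑ u, ({x : X | R v x u}.ncard : ℝ≥0∞) * μ {w | StartsInf R w u} := by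
  refine le_of_tendsto_of_tendsto' (tendsto_card_mul_measure_cylSet_pathLabels_succ hμ R v)
    (tendsto_sum_ncard_mul_measure_cylSet_pathLabels hμ R v) fun n => ?_
  rw [card_mul_measure_cylSet_succ hμ, sum_ncard_mul_measure_cylSet_pathLabels hμ]
  gcongr
  exact card_pathLabels_succ_le n v

lemma card_mul_measure_startsInf {R : V → X → V → Prop} (hR : RightResolving R) (v : V) :
    (Fintype.card X : ℝ≥0∞) * μ {w | StartsInf R w v}
      = ∑ u, ({x : X | R v x u}.ncard : ℝ≥0∞) * μ {w | StartsInf R w u} := by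
  refine tendsto_nhds_unique (tendsto_card_mul_measure_cylSet_pathLabels_succ hμ R v)
    ((tendsto_sum_ncard_mul_measure_cylSet_pathLabels hμ R v).congr fun n => ?_)
  rw [card_mul_measure_cylSet_succ hμ, sum_ncard_mul_measure_cylSet_pathLabels hμ,
    card_pathLabels_succ hR]

lemma card_mul_measure_endsInf {E : V → X → V → Prop} (hE : RightResolving E) (u : V) :
    (Fintype.card X : ℝ≥0∞) * μ {w | EndsInf E w u}
      = ∑ v, ({x : X | E v x u}.ncard : ℝ≥0∞) * μ {w | EndsInf E w v} := by
  have := isProbabilityMeasure_of_measure_cyl hμ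
  -- `EndsInf E` is, by definition, `StartsInf` of the reversed graph.
  refine ENNReal.eq_of_forall_le_of_sum_le
    (fun u _ => card_mul_measure_startsInf_le hμ (fun a x b => E b x a) u) ?_
    (ENNReal.sum_ne_top.mpr fun v _ => mul_ne_top (natCast_ne_top _) (measure_ne_top μ _))
    (Finset.mem_univ u)
  rw [Finset.sum_comm]
  refine Finset.sum_le_sum fun v _ => ?_
  rw [← Finset.sum_mul]
  gcongr
  exact_mod_cast sum_ncard_le_card hE v

end Eigen

/-- For a finite right-resolving labeled graph with adjacency matrix `a_{vu}` and the uniform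
Bernoulli measure: a nonzero vector `(μ(B_v))_v` is a right eigenvector of the adjacency matrix
with eigenvalue `|X|`, and a nonzero vector `(μ(F_v))_v` is a left eigenvector with
eigenvalue `|X|`. -/
theorem stmt_8 {V X : Type*} [Fintype V] [Fintype X] [Nonempty X] [MeasurableSpace X]
    (E : V → X → V → Prop) (hrr : RightResolving E)
    (μ : Measure (ℕ → X))
    (hμ : ∀ u : List X, μ (Cyl u) = ((Fintype.card X : ℝ≥0∞))⁻¹ ^ u.length) :
    ((∃ v : V, μ {w | StartsInf E w v} ≠ 0) →
      ∀ v : V, (Fintype.card X : ℝ≥0∞) * μ {w | StartsInf E w v} =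
        ∑ u : V, ({x : X | E v x u}.ncard : ℝ≥0∞) * μ {w | StartsInf E w u}) ∧
    ((∃ v : V, μ {w | EndsInf E w v} ≠ 0) →
      ∀ u : V, (Fintype.card X : ℝ≥0∞) * μ {w | EndsInf E w u} =
        ∑ v : V, ({x : X | E v x u}.ncard : ℝ≥0∞) * μ {w | EndsInf E w v}) :=
  ⟨fun _ => card_mul_measure_startsInf hμ hrr, fun _ => card_mul_measure_endsInf hμ hrr⟩
end

section
/- For a finite labeled graph Γ over a finite alphabet X and the uniform Bernoulli measure μ_u, all the measures μ_u(B_v), μ_u(F_v) for vertices v, as well as Σ_v μ_u(F_v), are rational numbers. -/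
/-!
Let `q n S` be the proportion of words of length `n` labelling a path that starts in `S ⊆ V`.
A word `x u` is readable from `S` iff `u` is readable from the successor set `S·x`, so
`q (n + 1) = T (q n)` for the averaging operator `(T f) S = |X|⁻¹ ∑ₓ f (S·x)`, a rational
matrix acting on functions of subsets of `V`. By König's lemma `B_v` is the decreasing
intersection of the sets of sequences whose length-`n` prefix is readable from `{v}`, so
`μ(B_v) = lim q n {v}`. Since `T` does not increase the sup norm, its orbits are bounded, which
forces `ker (1 - T) ∩ range (1 - T) = 0`; the limit of the orbit of `q 0` is then its projection
onto `ker (1 - T)` along `range (1 - T)`, and this projection is defined over `ℚ`.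
Finally `F_v` is `B_v` for the reversed graph.
-/

open MeasureTheory ENNReal

open Filter Topology

lemma LinearMap.mem_ker_id_sub_iff {R M : Type*} [Ring R] [AddCommGroup M] [Module R M]
    {T : M →ₗ[R] M} {f : M} : f ∈ LinearMap.ker (LinearMap.id - T) ↔ T f = f := by
  rw [LinearMap.mem_ker, LinearMap.sub_apply, LinearMap.id_apply, sub_eq_zero, eq_comm]

section Averaging

variable {ι X : Type*} [Fintype X] (σ : ι → X → ι) (𝕜 : Type*) [Field 𝕜]

def averagingOp : (ι → 𝕜) →ₗ[𝕜] (ι → 𝕜) where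
  toFun f i := (∑ x, f (σ i x)) / Fintype.card X
  map_add' f g := by ext i; simp [Finset.sum_add_distrib, add_div]
  map_smul' c f := by ext i; simp [← Finset.mul_sum, mul_div_assoc]

lemma averagingOp_apply (f : ι → 𝕜) (i : ι) :
    averagingOp σ 𝕜 f i = (∑ x, f (σ i x)) / Fintype.card X := rfl

lemma averagingOp_ratCast (f : ι → ℚ) :
    averagingOp σ ℝ (fun i ↦ (f i : ℝ)) = fun i ↦ (averagingOp σ ℚ f i : ℝ) := by
  ext i
  simp [averagingOp_apply]

variable {σ 𝕜} [LinearOrder 𝕜] [IsStrictOrderedRing 𝕜] [Nonempty X]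

lemma abs_averagingOp_le {f : ι → 𝕜} {C : 𝕜} (hf : ∀ i, |f i| ≤ C) (i : ι) :
    |averagingOp σ 𝕜 f i| ≤ C := by
  have hX : (0 : 𝕜) < Fintype.card X := by exact_mod_cast Fintype.card_pos
  rw [averagingOp_apply, abs_div, abs_of_pos hX, div_le_iff₀ hX]
  calc |∑ x, f (σ i x)| ≤ ∑ _x : X, C := (Finset.abs_sum_le_sum_abs _ _).trans
        (Finset.sum_le_sum fun x _ ↦ hf _)
    _ = C * Fintype.card X := by simp [mul_comm]

/-- If `v = w - T w` is fixed by `T`, then `Tⁿ w = w - n • v`, which stays bounded only if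
`v = 0`. -/
lemma disjoint_ker_range_averagingOp [Finite ι] [Archimedean 𝕜] :
    Disjoint (LinearMap.ker (LinearMap.id - averagingOp σ 𝕜))
      (LinearMap.range (LinearMap.id - averagingOp σ 𝕜)) := by
  set T := averagingOp σ 𝕜
  rw [Submodule.disjoint_def]
  rintro v hv ⟨w, rfl⟩
  set v := w - T w
  have hfix : T v = v := LinearMap.mem_ker_id_sub_iff.mp hv
  have horbit : ∀ n : ℕ, (T ^ n) w = w - (n : 𝕜) • v := by
    intro n
    induction n with
    | zero => simp
    | succ n ih =>
      rw [pow_succ', Module.End.mul_apply, ih, map_sub, map_smul, hfix]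
      have : T w = w - v := by simp [v]
      rw [this]
      push_cast
      module
  obtain ⟨C, hC⟩ := (Set.finite_range fun i ↦ |w i|).bddAbove
  have hbdd : ∀ n : ℕ, ∀ i, |(T ^ n) w i| ≤ C := by
    intro n
    induction n with
    | zero => exact fun i ↦ hC ⟨i, rfl⟩
    | succ n ih =>
      rw [pow_succ', Module.End.mul_apply]
      exact abs_averagingOp_le ih
  ext i
  change v i = 0
  by_contra hvi
  obtain ⟨n, hn⟩ := exists_nat_gt ((C + |w i|) / |v i|)
  rw [div_lt_iff₀ (abs_pos.mpr hvi)] at hn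
  have hwn : |w i - n * v i| ≤ C := by simpa [horbit] using hbdd n i
  have := abs_sub_abs_le_abs_sub ((n : 𝕜) * v i) (w i)
  rw [abs_mul, Nat.abs_cast, abs_sub_comm] at this
  linarith

lemma isCompl_ker_range_averagingOp [Finite ι] [Archimedean 𝕜] :
    IsCompl (LinearMap.ker (LinearMap.id - averagingOp σ 𝕜))
      (LinearMap.range (LinearMap.id - averagingOp σ 𝕜)) :=
  (Submodule.isCompl_iff_disjoint _ _
    (by rw [add_comm, LinearMap.finrank_range_add_finrank_ker])).mpr
    disjoint_ker_range_averagingOp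

lemma eq_zero_of_tendsto_orbit_of_mem_range [Finite ι] {d : ℕ → ι → ℝ} {D : ι → ℝ}
    (hd : ∀ n, d (n + 1) = averagingOp σ ℝ (d n))
    (h0 : d 0 ∈ LinearMap.range (LinearMap.id - averagingOp σ ℝ))
    (hD : Tendsto d atTop (𝓝 D)) : D = 0 := by
  set T := averagingOp σ ℝ
  have hmem : ∀ n, d n ∈ LinearMap.range (LinearMap.id - T) := by
    intro n
    induction n with
    | zero => exact h0
    | succ n ih =>
      obtain ⟨g, hg⟩ := ih
      exact ⟨T g, by simp [hd, ← hg]⟩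
  have hrange : D ∈ LinearMap.range (LinearMap.id - T) :=
    (Submodule.closed_of_finiteDimensional _).mem_of_tendsto hD (Eventually.of_forall hmem)
  have hfix : T D = D := by
    refine tendsto_nhds_unique ((T.continuous_of_finiteDimensional.tendsto D).comp hD) ?_
    simpa [Function.comp_def, hd] using hD.comp (tendsto_add_atTop_nat 1)
  exact Submodule.disjoint_def.mp disjoint_ker_range_averagingOp D
    (LinearMap.mem_ker_id_sub_iff.mpr hfix) hrange

theorem exists_rat_eq_of_tendsto_orbit [Finite ι] {q : ℕ → ι → ℚ}
    (hq : ∀ n, q (n + 1) = averagingOp σ ℚ (q n)) {L : ι → ℝ}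
    (hL : Tendsto (fun n i ↦ (q n i : ℝ)) atTop (𝓝 L)) :
    ∃ k : ι → ℚ, L = fun i ↦ (k i : ℝ) := by
  obtain ⟨k, r, hk, ⟨g, rfl⟩, hkr⟩ := Submodule.codisjoint_iff_exists_add_eq.mp
    (isCompl_ker_range_averagingOp (σ := σ)).codisjoint (q 0)
  have hTk : averagingOp σ ℝ (fun i ↦ (k i : ℝ)) = fun i ↦ (k i : ℝ) := by
    rw [averagingOp_ratCast, LinearMap.mem_ker_id_sub_iff.mp hk]
  refine ⟨k, sub_eq_zero.mp (eq_zero_of_tendsto_orbit_of_mem_range (σ := σ)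
    (d := fun n i ↦ (q n i : ℝ) - k i) ?_ ?_ (hL.sub_const _))⟩
  · intro n
    rw [show (fun i ↦ (q n i : ℝ) - k i) = (fun i ↦ (q n i : ℝ)) - fun i ↦ (k i : ℝ) from rfl,
      map_sub, hTk, averagingOp_ratCast, hq]
    rfl
  · refine ⟨fun i ↦ (g i : ℝ), ?_⟩
    ext i
    have := congrFun hkr i
    simp only [LinearMap.sub_apply, LinearMap.id_apply, Pi.sub_apply, Pi.add_apply] at this ⊢
    rw [← this, congrFun (averagingOp_ratCast σ g) i]
    push_cast
    ring

end Averaging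

section Readable

variable {V X : Type*} (E : V → X → V → Prop)

def IsReadable {n : ℕ} (S : Set V) (c : Fin n → X) : Prop :=
  ∃ p : ℕ → V, p 0 ∈ S ∧ ∀ i : Fin n, E (p i) (c i) (p (i + 1))

def succSet (S : Set V) (x : X) : Set V := {b | ∃ a ∈ S, E a x b}

variable {E}

lemma isReadable_cons {n : ℕ} {S : Set V} {x : X} {t : Fin n → X} :
    IsReadable E S (Fin.cons x t) ↔ IsReadable E (succSet E S x) t := by
  constructor
  · rintro ⟨p, hp0, hp⟩
    refine ⟨fun i ↦ p (i + 1), ⟨p 0, hp0, by simpa using hp 0⟩, fun i ↦ ?_⟩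
    simpa using hp i.succ
  · rintro ⟨p, ⟨a, ha, hax⟩, hp⟩
    refine ⟨fun i ↦ Nat.casesOn i a p, ha, fun i ↦ ?_⟩
    cases i using Fin.cases with
    | zero => simpa using hax
    | succ i => simpa using hp i

lemma IsReadable.init {n : ℕ} {S : Set V} {c : Fin (n + 1) → X} (h : IsReadable E S c) :
    IsReadable E S (Fin.init c) := by
  obtain ⟨p, hp0, hp⟩ := h
  exact ⟨p, hp0, fun i ↦ by simpa [Fin.init] using hp i.castSucc⟩

variable [Fintype X]

lemma natCard_isReadable_succ (n : ℕ) (S : Set V) :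
    Nat.card {c : Fin (n + 1) → X // IsReadable E S c} =
      ∑ x, Nat.card {t : Fin n → X // IsReadable E (succSet E S x) t} := by
  rw [← Nat.card_sigma]
  refine Nat.card_congr (((Fin.consEquiv fun _ ↦ X).symm.subtypeEquiv fun c ↦ ?_).trans
    (Equiv.subtypeProdEquivSigmaSubtype fun x t ↦ IsReadable E (succSet E S x) t))
  conv_lhs => rw [← Fin.cons_self_tail c]
  exact isReadable_cons

lemma natCard_isReadable_succ_le (n : ℕ) (S : Set V) :
    Nat.card {c : Fin (n + 1) → X // IsReadable E S c} ≤
      Nat.card {t : Fin n → X // IsReadable E S t} * Fintype.card X := by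
  rw [← Nat.card_eq_fintype_card, ← Nat.card_prod]
  refine Nat.card_le_card_of_injective (fun c ↦ (⟨Fin.init c.1, c.2.init⟩, c.1 (Fin.last n)))
    fun c c' h ↦ ?_
  simp only [Prod.mk.injEq, Subtype.mk.injEq] at h
  rw [Subtype.ext_iff, ← Fin.snoc_init_self c.1, ← Fin.snoc_init_self c'.1, h.1, h.2]

variable (E) in
noncomputable def readableFraction (n : ℕ) (S : Set V) : ℚ :=
  Nat.card {c : Fin n → X // IsReadable E S c} / Fintype.card X ^ n

lemma readableFraction_nonneg (n : ℕ) (S : Set V) : 0 ≤ readableFraction E n S := by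
  unfold readableFraction
  positivity

lemma readableFraction_succ (n : ℕ) :
    readableFraction E (n + 1) = averagingOp (succSet E) ℚ (readableFraction E n) := by
  ext S
  simp only [readableFraction, averagingOp_apply, natCard_isReadable_succ, Nat.cast_sum,
    Finset.sum_div, pow_succ, div_div]

lemma readableFraction_succ_le [Nonempty X] (n : ℕ) (S : Set V) :
    readableFraction E (n + 1) S ≤ readableFraction E n S := by
  have hX : (0 : ℚ) < Fintype.card X := by exact_mod_cast Fintype.card_pos
  rw [readableFraction, readableFraction, div_le_div_iff₀ (by positivity) (by positivity),
    pow_succ', ← mul_assoc]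
  gcongr
  exact_mod_cast natCard_isReadable_succ_le n S

lemma tendsto_readableFraction [Nonempty X] :
    Tendsto (fun n S ↦ (readableFraction E n S : ℝ)) atTop
      (𝓝 fun S ↦ ⨅ n, (readableFraction E n S : ℝ)) := by
  refine tendsto_pi_nhds.mpr fun S ↦ tendsto_atTop_ciInf ?_ ⟨0, ?_⟩
  · exact antitone_nat_of_succ_le fun n ↦ by exact_mod_cast readableFraction_succ_le n S
  · rintro _ ⟨n, rfl⟩
    exact Rat.cast_nonneg.mpr <| readableFraction_nonneg (E := E) n S

end Readable

/-- König's lemma, via compactness of `ℕ → V` for finite discrete `V`. -/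
lemma exists_path_of_forall_exists_path {V : Type*} [Finite V] (R : ℕ → V → V → Prop) (v : V)
    (h : ∀ n, ∃ p : ℕ → V, p 0 = v ∧ ∀ i < n, R i (p i) (p (i + 1))) :
    ∃ p : ℕ → V, p 0 = v ∧ ∀ i, R i (p i) (p (i + 1)) := by
  let _ : TopologicalSpace V := ⊥
  have : DiscreteTopology V := ⟨rfl⟩
  let K : ℕ → Set (ℕ → V) := fun n ↦ {p | p 0 = v ∧ ∀ i < n, R i (p i) (p (i + 1))}
  have hclosed : ∀ n, IsClosed (K n) := by
    intro n
    simp only [K, Set.ofPred_and, Set.ofPred_forall]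
    refine ((isClosed_discrete {v}).preimage (continuous_apply (A := fun _ : ℕ ↦ V) 0)).inter <|
      isClosed_iInter fun i ↦ isClosed_iInter fun _ ↦ ?_
    exact (isClosed_discrete {q : V × V | R i q.1 q.2}).preimage
      ((continuous_apply (A := fun _ : ℕ ↦ V) i).prodMk (continuous_apply (i + 1)))
  obtain ⟨p, hp⟩ := IsCompact.nonempty_iInter_of_sequence_nonempty_isCompact_isClosed K
    (fun n p hp ↦ ⟨hp.1, fun i hi ↦ hp.2 i (by omega)⟩) h (hclosed 0).isCompact hclosed
  simp only [Set.mem_iInter] at hp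
  exact ⟨p, (hp 0).1, fun i ↦ (hp (i + 1)).2 i (Nat.lt_succ_self i)⟩

lemma setOf_startsInf_eq_iInter_s9 {V X : Type*} [Finite V] (E : V → X → V → Prop) (v : V) :
    {w | StartsInf E w v} = ⋂ n, {w | IsReadable E {v} fun i : Fin n ↦ w i} := by
  ext w
  simp only [Set.mem_ofPred_eq, Set.mem_iInter, StartsInf, IsReadable, Set.mem_singleton_iff]
  refine ⟨fun ⟨p, hp0, hp⟩ n ↦ ⟨p, hp0, fun i ↦ hp i⟩, fun h ↦ ?_⟩
  refine exists_path_of_forall_exists_path (fun i a b ↦ E a (w i) b) v fun n ↦ ?_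
  obtain ⟨p, hp0, hp⟩ := h n
  exact ⟨p, hp0, fun i hi ↦ hp ⟨i, hi⟩⟩

lemma measure_iInter_eq_iInf_of_add_compl {α : Type*} [MeasurableSpace α] {μ : Measure α}
    {s : ℕ → Set α} (hs : Antitone s) (huniv : μ Set.univ = 1)
    (hcompl : ∀ n, μ (s n) + μ (s n)ᶜ = 1) : μ (⋂ n, s n) = ⨅ n, μ (s n) := by
  refine le_antisymm (le_iInf fun n ↦ measure_mono (Set.iInter_subset _ n)) ?_
  have hle : ∀ n, μ (s n) ≤ 1 := fun n ↦ hcompl n ▸ le_self_add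
  have hcompl' : ∀ n, μ (s n)ᶜ = 1 - μ (s n) := fun n ↦
    ENNReal.eq_sub_of_add_eq (ne_top_of_le_ne_top one_ne_top (hle n))
      ((add_comm _ _).trans (hcompl n))
  have hU : μ (⋂ n, s n)ᶜ = 1 - ⨅ n, μ (s n) := by
    have hmono : Monotone fun n ↦ (s n)ᶜ := (compl_antitone (α := Set α)).comp hs
    rw [Set.compl_iInter, hmono.measure_iUnion, ENNReal.sub_iInf]
    simp_rw [hcompl']
  have h1 : 1 ≤ μ (⋂ n, s n) + (1 - ⨅ n, μ (s n)) := hU ▸ huniv ▸ measure_univ_le_add_compl _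
  calc ⨅ n, μ (s n) = 1 - (1 - ⨅ n, μ (s n)) :=
        (ENNReal.sub_sub_cancel one_ne_top (iInf_le_of_le 0 (hle 0))).symm
    _ ≤ μ (⋂ n, s n) := tsub_le_iff_right.mpr h1

section Bernoulli

variable {X : Type*} [Fintype X] [Nonempty X]

lemma ncard_mul_add_ncard_compl_mul {n : ℕ} (A : Set (Fin n → X)) :
    A.ncard * (Fintype.card X : ℝ≥0∞)⁻¹ ^ n + Aᶜ.ncard * (Fintype.card X : ℝ≥0∞)⁻¹ ^ n = 1 := by
  rw [← add_mul, ← Nat.cast_add, Set.ncard_add_ncard_compl, Nat.card_eq_fintype_card,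
    Fintype.card_fun, Fintype.card_fin, Nat.cast_pow, ← mul_pow,
    ENNReal.mul_inv_cancel (by simp) (by simp), one_pow]

variable [MeasurableSpace X] {μ : Measure (ℕ → X)}

lemma measure_preimage_prefix
    (hμ : ∀ u : List X, μ (Cyl u) = ((Fintype.card X : ℝ≥0∞))⁻¹ ^ u.length)
    (n : ℕ) (A : Set (Fin n → X)) :
    μ {w | (fun i : Fin n ↦ w i) ∈ A} = A.ncard * (Fintype.card X : ℝ≥0∞)⁻¹ ^ n := by
  classical
  have hle : ∀ B : Set (Fin n → X),
      μ {w | (fun i : Fin n ↦ w i) ∈ B} ≤ B.ncard * (Fintype.card X : ℝ≥0∞)⁻¹ ^ n := by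
    intro B
    have hcyl : ∀ c : Fin n → X, {w : ℕ → X | (fun i : Fin n ↦ w i) = c} = Cyl (List.ofFn c) := by
      intro c
      ext w
      simp [Cyl, funext_iff, Fin.forall_iff]
    calc μ {w | (fun i : Fin n ↦ w i) ∈ B}
        = μ (⋃ c ∈ B.toFinset, {w : ℕ → X | (fun i : Fin n ↦ w i) = c}) := by
          congr 1; ext w; simp
      _ ≤ ∑ c ∈ B.toFinset, μ {w : ℕ → X | (fun i : Fin n ↦ w i) = c} :=
          measure_biUnion_finset_le _ _
      _ = B.ncard * (Fintype.card X : ℝ≥0∞)⁻¹ ^ n := by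
          simp [hcyl, hμ, Set.ncard_eq_toFinset_card']
  have hcover :
      1 ≤ μ {w | (fun i : Fin n ↦ w i) ∈ A} + Aᶜ.ncard * (Fintype.card X : ℝ≥0∞)⁻¹ ^ n :=
    calc 1 = μ Set.univ := by simpa [Cyl] using (hμ []).symm
      _ ≤ μ {w | (fun i : Fin n ↦ w i) ∈ A} + μ {w | (fun i : Fin n ↦ w i) ∈ A}ᶜ :=
          measure_univ_le_add_compl _
      _ ≤ _ := by gcongr; exact hle Aᶜ
  refine le_antisymm (hle A) ?_
  rw [ENNReal.eq_sub_of_add_eq (ENNReal.mul_ne_top (by simp) (by simp))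
    (ncard_mul_add_ncard_compl_mul A)]
  exact tsub_le_iff_right.mpr hcover

lemma measure_preimage_prefix_add_compl
    (hμ : ∀ u : List X, μ (Cyl u) = ((Fintype.card X : ℝ≥0∞))⁻¹ ^ u.length)
    {n : ℕ} (A : Set (Fin n → X)) :
    μ {w | (fun i : Fin n ↦ w i) ∈ A} + μ {w | (fun i : Fin n ↦ w i) ∈ A}ᶜ = 1 := by
  rw [← ncard_mul_add_ncard_compl_mul A, ← measure_preimage_prefix hμ,
    ← measure_preimage_prefix hμ]
  rfl

end Bernoulli

section Graph

variable {V X : Type*} [Fintype X] [Nonempty X] [MeasurableSpace X] {μ : Measure (ℕ → X)}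

lemma measure_setOf_isReadable (E : V → X → V → Prop)
    (hμ : ∀ u : List X, μ (Cyl u) = ((Fintype.card X : ℝ≥0∞))⁻¹ ^ u.length)
    (n : ℕ) (S : Set V) :
    μ {w | IsReadable E S fun i : Fin n ↦ w i} = ENNReal.ofReal (readableFraction E n S) := by
  refine (measure_preimage_prefix hμ n {c | IsReadable E S c}).trans ?_
  rw [readableFraction, Rat.cast_div, Rat.cast_natCast, Rat.cast_pow, Rat.cast_natCast,
    ENNReal.ofReal_div_of_pos (by positivity),
    ENNReal.ofReal_natCast, ENNReal.ofReal_pow (by positivity), ENNReal.ofReal_natCast,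
    div_eq_mul_inv, ENNReal.inv_pow]
  rfl

theorem exists_rat_measure_setOf_startsInf [Finite V] (E : V → X → V → Prop)
    (hμ : ∀ u : List X, μ (Cyl u) = ((Fintype.card X : ℝ≥0∞))⁻¹ ^ u.length) (v : V) :
    ∃ q : ℚ, 0 ≤ q ∧ μ {w | StartsInf E w v} = ENNReal.ofReal q := by
  obtain ⟨k, hk⟩ := exists_rat_eq_of_tendsto_orbit (readableFraction_succ (E := E))
    tendsto_readableFraction
  have hkv : (k {v} : ℝ) = ⨅ n, (readableFraction E n {v} : ℝ) := (congrFun hk {v}).symm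
  have hnonneg : ∀ n, (0 : ℝ) ≤ readableFraction E n {v} := fun n ↦
    Rat.cast_nonneg.mpr (readableFraction_nonneg n {v})
  have hanti : Antitone fun n ↦ {w : ℕ → X | IsReadable E {v} fun i : Fin n ↦ w i} :=
    antitone_nat_of_succ_le fun n _ hw ↦ hw.init
  have huniv : μ Set.univ = 1 := by simpa [Cyl] using hμ []
  refine ⟨k {v}, by exact_mod_cast hkv ▸ le_ciInf hnonneg, ?_⟩
  rw [setOf_startsInf_eq_iInter_s9, measure_iInter_eq_iInf_of_add_compl hanti huniv fun n ↦ ?_, hkv,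
    Monotone.map_ciInf_of_continuousAt ENNReal.continuous_ofReal.continuousAt
      ENNReal.ofReal_mono ⟨0, Set.forall_mem_range.mpr hnonneg⟩]
  · simp_rw [measure_setOf_isReadable E hμ]
  · exact measure_preimage_prefix_add_compl hμ {c | IsReadable E {v} c}

end Graph

/-- For a finite labeled graph and the uniform Bernoulli measure, all the measures `μ(B_v)`,
`μ(F_v)` and the sum `Σ_v μ(F_v)` are rational numbers. -/
theorem stmt_9 {V X : Type*} [Fintype V] [Fintype X] [Nonempty X] [MeasurableSpace X]
    (E : V → X → V → Prop)
    (μ : Measure (ℕ → X))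
    (hμ : ∀ u : List X, μ (Cyl u) = ((Fintype.card X : ℝ≥0∞))⁻¹ ^ u.length) :
    (∀ v : V, ∃ q : ℚ, 0 ≤ q ∧ μ {w | StartsInf E w v} = ENNReal.ofReal (q : ℝ)) ∧
    (∀ v : V, ∃ q : ℚ, 0 ≤ q ∧ μ {w | EndsInf E w v} = ENNReal.ofReal (q : ℝ)) ∧
    (∃ q : ℚ, 0 ≤ q ∧ ∑ v : V, μ {w | EndsInf E w v} = ENNReal.ofReal (q : ℝ)) := by
  have hF : ∀ v : V, ∃ q : ℚ, 0 ≤ q ∧ μ {w | EndsInf E w v} = ENNReal.ofReal (q : ℝ) :=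
    exists_rat_measure_setOf_startsInf (fun a x b ↦ E b x a) hμ
  refine ⟨exists_rat_measure_setOf_startsInf E hμ, hF, ?_⟩
  choose q hq0 hq using hF
  refine ⟨∑ v, q v, Finset.sum_nonneg fun v _ ↦ hq0 v, ?_⟩
  rw [Finset.sum_congr rfl fun v _ ↦ hq v, Rat.cast_sum,
    ENNReal.ofReal_sum_of_nonneg fun v _ ↦ Rat.cast_nonneg.mpr (hq0 v)]
end

section
/- Let (G, X*) be a contracting self-similar action with nucleus N, limit G-space measure μ, and tile T. Then μ(T) equals the measure number meas(Γ_N) of the graph Γ_N obtained from the Moore diagram of the nucleus by replacing each label (x,y) by x; in particular μ(T) is a positive integer. Moreover μ(T) = 1 if and only if the action satisfies the open set condition. -/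
open MeasureTheory ENNReal

/-- A self-similar action of the group `G` over the alphabet `X`, given by the action
`g(xw) = (toFun g x) ((res g x) w)` on words: `toFun g` is the action on the first letter and
`res g x = g|_x` is the restriction. -/
structure SSA (G X : Type*) [Group G] where
  toFun : G → X → X
  res : G → X → G
  toFun_one : ∀ x, toFun 1 x = x
  res_one : ∀ x, res 1 x = 1
  toFun_mul : ∀ g h x, toFun (g * h) x = toFun g (toFun h x)
  res_mul : ∀ g h x, res (g * h) x = res g (toFun h x) * res h x

namespace SSA

variable {G X : Type*} [Group G]

/-- Restriction of `g` along a finite word (head of the list = first letter read):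
`g|_{x₁x₂…xₙ} = g|_{x₁}|_{x₂}…|_{xₙ}`. -/
def resW (S : SSA G X) : G → List X → G
  | g, [] => g
  | g, x :: v => S.resW (S.res g x) v

/-- Action of `g` on a finite word (head of the list = first letter read):
`g(xw) = g(x) (g|_x)(w)`. -/
def actW (S : SSA G X) : G → List X → List X
  | _, [] => []
  | g, x :: v => S.toFun g x :: S.actW (S.res g x) v

/-- `N` is the nucleus of the (contracting) action: it is closed under restrictions, every
element restricts into `N` on all sufficiently long words, and it is the smallest such set. -/
def IsNucleus (S : SSA G X) (N : Finset G) : Prop :=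
  (∀ g ∈ N, ∀ x : X, S.res g x ∈ N) ∧
  (∀ g : G, ∃ k : ℕ, ∀ v : List X, k ≤ v.length → S.resW g v ∈ N) ∧
  ∀ N' : Finset G, (∀ g : G, ∃ k : ℕ, ∀ v : List X, k ≤ v.length → S.resW g v ∈ N') → N ⊆ N'

/-- There is a left-infinite path in the Moore diagram of the nucleus `N` which ends at the
vertex `h` and whose `i`-th edge is labeled `(w i, w' i)` (sequences are left-infinite,
index `0` being the rightmost letter): the vertices `q i ∈ N` satisfy
`q (i+1)|_{w i} = q i` and `q (i+1) (w i) = w' i`, with `q 0 = h`. -/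
def MoorePath (S : SSA G X) (N : Finset G) (w w' : ℕ → X) (h : G) : Prop :=
  ∃ q : ℕ → G, q 0 = h ∧ (∀ i, q i ∈ N) ∧
    ∀ i : ℕ, S.res (q (i + 1)) (w i) = q i ∧ S.toFun (q (i + 1)) (w i) = w' i

/-- The asymptotic equivalence relation on `X^{-ω} × G`: `w·g ~ w'·g'` iff there is a
left-infinite path in the Moore diagram of the nucleus labeled `(w, w')` ending at `g'g⁻¹`. -/
def AsympEquiv (S : SSA G X) (N : Finset G) (p q : (ℕ → X) × G) : Prop :=
  S.MoorePath N p.1 q.1 (q.2 * p.2⁻¹)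

/-- The limit `G`-space: the quotient of `X^{-ω} × G` by the asymptotic equivalence relation. -/
def LimitGSpace (S : SSA G X) (N : Finset G) : Type _ :=
  Quot (S.AsympEquiv N)

/-- The tile `𝒯_v ⊂ J_G` for a finite word `v` (encoded as a list whose head is the rightmost
letter): the image in the limit `G`-space of `X^{-ω}v × {1}`.  For `v = []` this is the tile `𝒯`,
the image of `X^{-ω} × {1}`. -/
def Tile (S : SSA G X) (N : Finset G) (v : List X) : Set (S.LimitGSpace N) :=
  Quot.mk (S.AsympEquiv N) ''
    {p : (ℕ → X) × G | p.2 = 1 ∧ ∀ (i : ℕ) (h : i < v.length), p.1 i = v.get ⟨i, h⟩}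

/-- The translated tile `𝒯·g`: the image in the limit `G`-space of `X^{-ω} × {g}`. -/
def TileT (S : SSA G X) (N : Finset G) (g : G) : Set (S.LimitGSpace N) :=
  Quot.mk (S.AsympEquiv N) '' {p : (ℕ → X) × G | p.2 = g}

variable [MeasurableSpace X] [MeasurableSpace G]

instance (S : SSA G X) (N : Finset G) : MeasurableSpace (S.LimitGSpace N) :=
  inferInstanceAs (MeasurableSpace (Quot (S.AsympEquiv N)))

/-- The measure `μ` on the limit `G`-space: the push-forward under the quotient map of the
product of the (uniform Bernoulli) measure `μ0` on `X^{-ω}` and the counting measure on `G`. -/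
noncomputable def limitMeasure (S : SSA G X) (N : Finset G) (μ0 : Measure (ℕ → X)) :
    Measure (S.LimitGSpace N) :=
  Measure.map (Quot.mk (S.AsympEquiv N)) (μ0.prod Measure.count)

end SSA

/-!
The preimage of `𝒯` in `X^{-ω} × G` is the disjoint union of the sets `F_h × {h⁻¹}`, `h ∈ N`, so
`μ(𝒯) = Σ_h μ(F_h)`. By König's lemma `F_h` is the decreasing intersection over `m` of the sets of
sequences whose last `m` letters label a path of `Γ_N` ending at `h`, and the sum over `h` of their
measures is the average over the words `v` of length `m` of `|N|_v|`. Each `|N|_v|` is at least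
`c = min_u |N|_u|`, with equality as soon as `v` contains a minimizing word `u` as a factor; since
the proportion of words of length `k|u|` avoiding `u` in all `k` aligned blocks is at most
`(1 - |X|^{-|u|})^k`, the averages tend to `c`. Finally `c = 1` iff a single word restricts every
element of `N` to `1`, which is the open set condition.

All these sets are measurable because the cylinder measures force singletons of `X` to be
measurable.
-/

open Filter Topology

/-- The last `m` letters `w (m-1) … w 0` of a left-infinite sequence, head `w 0` as in `Cyl`. -/
def lastLetters {X : Type*} (w : ℕ → X) (m : ℕ) : List X :=
  List.ofFn fun i : Fin m => w i

theorem lastLetters_succ {X : Type*} (w : ℕ → X) (m : ℕ) :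
    lastLetters w (m + 1) = lastLetters w m ++ [w m] := by
  rw [lastLetters, lastLetters, List.ofFn_succ', List.concat_eq_append]
  rfl

section MeasurableAtom

variable {X : Type*} [MeasurableSpace X]

theorem swap_preimage_eq_self [DecidableEq X] {a b : X} (hb : b ∈ measurableAtom a) {T : Set X}
    (hT : MeasurableSet T) : Equiv.swap a b ⁻¹' T = T := by
  have hba : a ∈ measurableAtom b := measurableAtom_eq_of_mem hb ▸ mem_measurableAtom_self a
  have hab : a ∈ T ↔ b ∈ T :=
    ⟨mem_of_mem_measurableAtom hb hT, mem_of_mem_measurableAtom hba hT⟩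
  ext x
  simp only [Set.mem_preimage, Equiv.swap_apply_def]
  split_ifs with hxa hxb <;> simp_all

theorem comp_swap_preimage_eq_self [DecidableEq X] {ι : Type*} {a b : X} (hb : b ∈ measurableAtom a)
    {T : Set (ι → X)} (hT : MeasurableSet T) : (Equiv.swap a b ∘ ·) ⁻¹' T = T := by
  have hle : MeasurableSpace.pi ≤ MeasurableSpace.invariants (Equiv.swap a b ∘ · : (ι → X) → _) :=
    iSup_le fun i => MeasurableSpace.comap_le_iff_le_map.2 fun s hs =>
      ⟨measurable_pi_apply i hs,
        congrArg (fun t => (fun w : ι → X => w i) ⁻¹' t) (swap_preimage_eq_self hb hs)⟩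
  exact (hle T hT).2

/-- Swapping `a` with any letter of its atom preserves every measurable set, so the measurable
hull of `{w | w i = a}` contains `{w | w i ∈ measurableAtom a}`. -/
theorem measure_preimage_measurableAtom_le {ι : Type*} (μ : Measure (ι → X)) (i : ι) (a : X) :
    μ ((fun w : ι → X => w i) ⁻¹' measurableAtom a) ≤ μ {w | w i = a} := by
  classical
  refine (measure_mono fun w hw => ?_).trans (measure_toMeasurable _).le
  rw [← comp_swap_preimage_eq_self (T := toMeasurable μ _) (hw : w i ∈ measurableAtom a)
    (measurableSet_toMeasurable μ _)]
  exact subset_toMeasurable μ _ (Equiv.swap_apply_right a (w i))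

/-- If some atom contained two letters, the atoms of the other `|X| - 1` letters would cover
`X^ℕ`, of mass `1`, with total mass at most `(|X| - 1) / |X|`. -/
theorem measurableSingletonClass_of_measure_le [Fintype X] (μ : Measure (ℕ → X))
    [IsProbabilityMeasure μ] (hμ : ∀ a, μ {w | w 0 = a} ≤ (Fintype.card X : ℝ≥0∞)⁻¹) :
    MeasurableSingletonClass X := by
  classical
  refine ⟨fun a => ?_⟩
  suffices measurableAtom a = {a} from this ▸ MeasurableSet.measurableAtom_of_countable a
  refine Set.eq_singleton_iff_unique_mem.2 ⟨mem_measurableAtom_self a, fun b hb => ?_⟩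
  by_contra hba
  have hcover : Set.univ ⊆
      ⋃ x ∈ Finset.univ.erase b, (fun w : ℕ → X => w 0) ⁻¹' measurableAtom x := by
    intro w _
    by_cases hw : w 0 = b
    · exact Set.mem_biUnion (Finset.mem_erase.2 ⟨Ne.symm hba, Finset.mem_univ a⟩)
        (by simpa [hw] using hb)
    · exact Set.mem_biUnion (Finset.mem_erase.2 ⟨hw, Finset.mem_univ _⟩)
        (mem_measurableAtom_self _)
  have hn : 0 < Fintype.card X := Fintype.card_pos_iff.2 ⟨a⟩
  have hle : (1 : ℝ≥0∞) ≤ ((Fintype.card X - 1 : ℕ) : ℝ≥0∞) * (Fintype.card X : ℝ≥0∞)⁻¹ :=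
    calc (1 : ℝ≥0∞) = μ Set.univ := measure_univ.symm
      _ ≤ ∑ x ∈ Finset.univ.erase b, μ ((fun w : ℕ → X => w 0) ⁻¹' measurableAtom x) :=
        (measure_mono hcover).trans (measure_biUnion_finset_le _ _)
      _ ≤ ∑ _x ∈ Finset.univ.erase b, (Fintype.card X : ℝ≥0∞)⁻¹ :=
        Finset.sum_le_sum fun x _ => (measure_preimage_measurableAtom_le μ 0 x).trans (hμ x)
      _ = _ := by
        rw [Finset.sum_const, Finset.card_erase_of_mem (Finset.mem_univ b), Finset.card_univ,
          nsmul_eq_mul]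
  refine hle.not_gt ?_
  rw [← div_eq_mul_inv, ENNReal.div_lt_iff (by simp; omega) (by simp), one_mul]
  exact Nat.cast_lt.2 (Nat.sub_lt hn one_pos)

end MeasurableAtom

theorem preimage_restrict_singleton {X : Type*} {m : ℕ} (v : Fin m → X) :
    (fun (w : ℕ → X) (i : Fin m) => w i) ⁻¹' {v} = Cyl (List.ofFn v) := by
  ext w
  simp [Cyl, funext_iff, Fin.forall_iff]

section UniformMeasure

variable {X : Type*} [Fintype X] [MeasurableSpace X] [MeasurableSingletonClass X]
  {μ0 : Measure (ℕ → X)}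

theorem measure_preimage_restrict_finset
    (hμ0 : ∀ u : List X, μ0 (Cyl u) = ((Fintype.card X : ℝ≥0∞))⁻¹ ^ u.length)
    {m : ℕ} (V : Finset (Fin m → X)) :
    μ0 ((fun (w : ℕ → X) (i : Fin m) => w i) ⁻¹' V) =
      V.card * (Fintype.card X : ℝ≥0∞)⁻¹ ^ m := by
  have hmeas : Measurable fun (w : ℕ → X) (i : Fin m) => w i := by fun_prop
  rw [← sum_measure_preimage_singleton V fun v _ => hmeas (measurableSet_singleton v)]
  simp [preimage_restrict_singleton, hμ0]

end UniformMeasure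

namespace SSA

variable {G X : Type*} [Group G] (S : SSA G X)

theorem resW_append (g : G) (u v : List X) : S.resW g (u ++ v) = S.resW (S.resW g u) v := by
  induction u generalizing g with
  | nil => rfl
  | cons x u ih => exact ih _

theorem resW_one (v : List X) : S.resW 1 v = 1 := by
  induction v with
  | nil => rfl
  | cons x v ih => simpa only [resW, S.res_one] using ih

theorem toFun_inv_toFun (g : G) (x : X) : S.toFun g⁻¹ (S.toFun g x) = x := by
  rw [← S.toFun_mul, inv_mul_cancel, S.toFun_one]

theorem res_inv_toFun (g : G) (x : X) : S.res g⁻¹ (S.toFun g x) = (S.res g x)⁻¹ := by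
  refine eq_inv_of_mul_eq_one_left ?_
  rw [← S.res_mul, inv_mul_cancel, S.res_one]

theorem resW_lastLetters_of_path {q : ℕ → G} {w : ℕ → X} {m : ℕ}
    (hq : ∀ i < m, S.res (q (i + 1)) (w i) = q i) :
    S.resW (q m) (lastLetters w m).reverse = q 0 := by
  induction m with
  | zero => rfl
  | succ m ih =>
    rw [lastLetters_succ, List.reverse_concat, resW, hq m m.lt_succ_self]
    exact ih fun i hi => hq i (by omega)

variable {S} {N : Finset G}

theorem IsNucleus.resW_mem (hN : S.IsNucleus N) {g : G} (hg : g ∈ N) (v : List X) :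
    S.resW g v ∈ N := by
  induction v generalizing g with
  | nil => exact hg
  | cons x v ih => exact ih (hN.1 g hg x)

theorem IsNucleus.one_mem [Nonempty X] (hN : S.IsNucleus N) : (1 : G) ∈ N := by
  obtain ⟨k, hk⟩ := hN.2.1 1
  simpa only [S.resW_one] using hk (List.replicate k (Classical.arbitrary X)) (by simp)

/-- Each vertex of the path is the restriction of a far-away vertex along a long word. -/
theorem IsNucleus.mem_of_path (hN : S.IsNucleus N) (F : Finset G) {q : ℕ → G} {w : ℕ → X}
    (hq : ∀ i, S.res (q (i + 1)) (w i) = q i) (hqF : ∀ i, q i ∈ F) (i : ℕ) : q i ∈ N := by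
  choose k hk using hN.2.1
  have hi : S.resW (q (i + F.sup k)) (lastLetters (fun j => w (i + j)) (F.sup k)).reverse = q i :=
    S.resW_lastLetters_of_path (q := fun j => q (i + j)) fun j _ => hq (i + j)
  rw [← hi]
  exact hk _ _ ((Finset.le_sup (hqF _)).trans (by simp [lastLetters]))

theorem moorePath_refl [Nonempty X] (hN : S.IsNucleus N) (w : ℕ → X) : S.MoorePath N w w 1 :=
  ⟨fun _ => 1, rfl, fun _ => hN.one_mem, fun i => ⟨S.res_one (w i), S.toFun_one (w i)⟩⟩

theorem MoorePath.symm (hN : S.IsNucleus N) {w w' : ℕ → X} {h : G}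
    (hp : S.MoorePath N w w' h) : S.MoorePath N w' w h⁻¹ := by
  classical
  obtain ⟨q, rfl, hqN, hq⟩ := hp
  have hstep : ∀ i, S.res (q (i + 1))⁻¹ (w' i) = (q i)⁻¹ ∧ S.toFun (q (i + 1))⁻¹ (w' i) = w i :=
    fun i => by rw [← (hq i).2, S.res_inv_toFun, S.toFun_inv_toFun, (hq i).1]; simp
  refine ⟨fun i => (q i)⁻¹, rfl, hN.mem_of_path (N.image (·⁻¹)) (fun i => (hstep i).1)
    (fun i => Finset.mem_image_of_mem _ (hqN i)), hstep⟩

theorem MoorePath.trans (hN : S.IsNucleus N) {w w' w'' : ℕ → X} {h h' : G}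
    (hp : S.MoorePath N w w' h) (hp' : S.MoorePath N w' w'' h') :
    S.MoorePath N w w'' (h' * h) := by
  classical
  obtain ⟨q, rfl, hqN, hq⟩ := hp
  obtain ⟨r, rfl, hrN, hr⟩ := hp'
  have hstep : ∀ i, S.res (r (i + 1) * q (i + 1)) (w i) = r i * q i ∧
      S.toFun (r (i + 1) * q (i + 1)) (w i) = w'' i := fun i => by
    rw [S.res_mul, S.toFun_mul, (hq i).1, (hq i).2, (hr i).1, (hr i).2]; simp
  refine ⟨fun i => r i * q i, rfl, hN.mem_of_path (Finset.image₂ (· * ·) N N)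
    (fun i => (hstep i).1) (fun i => Finset.mem_image₂_of_mem (hrN i) (hqN i)), hstep⟩

theorem asympEquiv_equivalence [Nonempty X] (hN : S.IsNucleus N) :
    Equivalence (S.AsympEquiv N) where
  refl p := by
    simpa only [AsympEquiv, mul_inv_cancel] using moorePath_refl hN p.1
  symm {p p'} hp := by
    simpa only [AsympEquiv, mul_inv_rev, inv_inv] using hp.symm hN
  trans {p p' p''} hp hp' := by
    simpa only [AsympEquiv, mul_assoc, inv_mul_cancel_left] using hp.trans hN hp'

variable (S N) in
/-- The set `F_h` of the paper. -/
def pathSet (h : G) : Set (ℕ → X) :=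
  {w | ∃ q : ℕ → G, q 0 = h ∧ (∀ i, q i ∈ N) ∧ ∀ i, S.res (q (i + 1)) (w i) = q i}

theorem exists_moorePath_iff {w : ℕ → X} {h : G} :
    (∃ w', S.MoorePath N w w' h) ↔ w ∈ S.pathSet N h := by
  constructor
  · rintro ⟨w', q, hq0, hqN, hq⟩
    exact ⟨q, hq0, hqN, fun i => (hq i).1⟩
  · rintro ⟨q, hq0, hqN, hq⟩
    exact ⟨fun i => S.toFun (q (i + 1)) (w i), q, hq0, hqN, fun i => ⟨hq i, rfl⟩⟩

theorem mem_of_mem_pathSet {w : ℕ → X} {h : G} (hw : w ∈ S.pathSet N h) : h ∈ N := by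
  obtain ⟨q, rfl, hqN, -⟩ := hw
  exact hqN 0

/-- Stated with codomain `S.LimitGSpace N`, the form in which the preimage arises from
`limitMeasure`. -/
theorem preimage_tile [Nonempty X] (hN : S.IsNucleus N) :
    @Set.preimage _ (S.LimitGSpace N) (Quot.mk _) (S.Tile N []) =
      ⋃ h ∈ N, S.pathSet N h ×ˢ {h⁻¹} := by
  have heqv := asympEquiv_equivalence hN
  ext ⟨w, g⟩
  have hmem : (w, g) ∈ @Set.preimage _ (S.LimitGSpace N) (Quot.mk _) (S.Tile N []) ↔
      ∃ w', S.AsympEquiv N (w, g) (w', 1) := by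
    constructor
    · rintro ⟨⟨w', g'⟩, ⟨rfl, -⟩, hp⟩
      exact ⟨w', heqv.symm (heqv.eqvGen_iff.1 (Quot.eq.1 hp))⟩
    · rintro ⟨w', hp⟩
      exact ⟨(w', 1), ⟨rfl, nofun⟩, Quot.eq.2 (heqv.eqvGen_iff.2 (heqv.symm hp))⟩
  simp only [hmem, AsympEquiv, one_mul, exists_moorePath_iff, Set.mem_iUnion, Set.mem_prod,
    Set.mem_singleton_iff]
  exact ⟨fun hw => ⟨g⁻¹, mem_of_mem_pathSet hw, hw, (inv_inv g).symm⟩,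
    by rintro ⟨h, -, hw, rfl⟩; simpa using hw⟩

theorem limitMeasure_tile [Nonempty X] [MeasurableSpace X] [MeasurableSpace G]
    [MeasurableSingletonClass G] [Countable G] (hN : S.IsNucleus N) (μ0 : Measure (ℕ → X))
    (hF : ∀ h, MeasurableSet (S.pathSet N h)) :
    S.limitMeasure N μ0 (S.Tile N []) = ∑ h ∈ N, μ0 (S.pathSet N h) := by
  have hmeas : ∀ h ∈ N, MeasurableSet (S.pathSet N h ×ˢ ({h⁻¹} : Set G)) :=
    fun h _ => (hF h).prod (measurableSet_singleton _)
  have hdisj : Set.PairwiseDisjoint ↑N fun h : G => S.pathSet N h ×ˢ ({h⁻¹} : Set G) :=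
    fun h _ h' _ hne => Set.disjoint_left.2 fun p hp hp' =>
      hne (inv_injective ((Set.mem_singleton_iff.1 hp.2).symm.trans hp'.2))
  have hmk : @Measurable _ (S.LimitGSpace N) _ _ (Quot.mk (S.AsympEquiv N)) := fun _ hs => hs
  have htile : MeasurableSet (S.Tile N []) := by
    change MeasurableSet (@Set.preimage _ (S.LimitGSpace N) (Quot.mk _) (S.Tile N []))
    rw [preimage_tile hN]
    exact N.measurableSet_biUnion hmeas
  rw [limitMeasure, Measure.map_apply hmk htile, preimage_tile hN,
    measure_biUnion_finset hdisj hmeas]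
  simp [Measure.prod_prod]

theorem exists_finitePath (hN : S.IsNucleus N) (w : ℕ → X) (m : ℕ) {g : G} (hg : g ∈ N) :
    ∃ q : ℕ → N, (q m : G) = g ∧ (q 0 : G) = S.resW g (lastLetters w m).reverse ∧
      ∀ i < m, S.res (q (i + 1)) (w i) = q i := by
  induction m generalizing g with
  | zero => exact ⟨fun _ => ⟨g, hg⟩, rfl, rfl, nofun⟩
  | succ m ih =>
    obtain ⟨q, hqm, hq0, hq⟩ := ih (hN.1 g hg (w m))
    refine ⟨Function.update q (m + 1) ⟨g, hg⟩, by simp, ?_, fun i hi => ?_⟩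
    · rw [Function.update_of_ne (by omega), hq0, lastLetters_succ, List.reverse_concat, resW]
    · rw [Function.update_of_ne (by omega : i ≠ m + 1)]
      rcases Nat.lt_succ_iff_lt_or_eq.1 hi with hi | rfl
      · rw [Function.update_of_ne (by omega), hq i hi]
      · rw [Function.update_self, hqm]

/-- König's lemma, by compactness of `ℕ → N` for the discrete topology on `N`. -/
theorem mem_pathSet_of_forall_finitePath {w : ℕ → X} {h : G}
    (H : ∀ m, ∃ q : ℕ → N, (q 0 : G) = h ∧ ∀ i < m, S.res (q (i + 1)) (w i) = q i) :
    w ∈ S.pathSet N h := by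
  let _ : TopologicalSpace N := ⊥
  have : DiscreteTopology N := ⟨rfl⟩
  set C : ℕ → Set (ℕ → N) :=
    fun m => {q | (q 0 : G) = h ∧ ∀ i < m, S.res (q (i + 1)) (w i) = q i}
  have hC : ∀ m, IsClosed (C m) := fun m => by
    simp only [C, Set.ofPred_and, Set.ofPred_forall]
    refine ((isClosed_discrete {x : N | (x : G) = h}).preimage
      (continuous_apply 0 : Continuous fun q : ℕ → N => q 0)).inter
      (isClosed_iInter fun i => isClosed_iInter fun _ => ?_)
    exact (isClosed_discrete {p : N × N | S.res p.1 (w i) = p.2}).preimage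
      ((continuous_apply (i + 1)).prodMk (continuous_apply i) :
        Continuous fun q : ℕ → N => (q (i + 1), q i))
  obtain ⟨q, hq⟩ := IsCompact.nonempty_iInter_of_sequence_nonempty_isCompact_isClosed C
    (fun m q hq => ⟨hq.1, fun i hi => hq.2 i (by omega)⟩) H (hC 0).isCompact hC
  simp only [C, Set.mem_iInter, Set.mem_ofPred_eq] at hq
  exact ⟨fun i => q i, (hq 0).1, fun i => (q i).2, fun i => (hq (i + 1)).2 i (by omega)⟩

section DecidableEq

variable [DecidableEq G]

variable (S N) in
/-- `N|_u`, the set of restrictions of the elements of `N` along the word `u`; as for `Cyl`, the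
head of `u` is the rightmost letter, so `u` is read from its last entry to its first. -/
def resImage (u : List X) : Finset G :=
  N.image fun g => S.resW g u.reverse

variable (S N) in
def finitePathSet (h : G) (m : ℕ) : Set (ℕ → X) :=
  {w | h ∈ S.resImage N (lastLetters w m)}

theorem pathSet_eq_iInter (hN : S.IsNucleus N) (h : G) :
    S.pathSet N h = ⋂ m, S.finitePathSet N h m := by
  ext w
  simp only [Set.mem_iInter]
  constructor
  · rintro ⟨q, rfl, hqN, hq⟩ m
    exact Finset.mem_image.2 ⟨q m, hqN m, S.resW_lastLetters_of_path fun i _ => hq i⟩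
  · intro hw
    refine mem_pathSet_of_forall_finitePath fun m => ?_
    obtain ⟨g, hg, rfl⟩ := Finset.mem_image.1 (hw m)
    obtain ⟨q, -, hq0, hq⟩ := exists_finitePath hN w m hg
    exact ⟨q, hq0, hq⟩

theorem resImage_append (u v : List X) :
    S.resImage N (u ++ v) = (S.resImage N v).image fun g => S.resW g u.reverse := by
  simp only [resImage, Finset.image_image, List.reverse_append]
  exact Finset.image_congr fun g _ => S.resW_append g _ _

theorem resImage_subset (hN : S.IsNucleus N) (u : List X) : S.resImage N u ⊆ N := by
  intro _ hg
  obtain ⟨g, hgN, rfl⟩ := Finset.mem_image.1 hg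
  exact hN.resW_mem hgN _

theorem resImage_append_subset (hN : S.IsNucleus N) (u v : List X) :
    S.resImage N (u ++ v) ⊆ S.resImage N u := by
  rw [resImage_append]
  intro _ hg
  obtain ⟨g, hgv, rfl⟩ := Finset.mem_image.1 hg
  exact Finset.mem_image_of_mem _ (resImage_subset hN v hgv)

theorem finitePathSet_antitone (hN : S.IsNucleus N) (h : G) :
    Antitone (S.finitePathSet N h) :=
  antitone_nat_of_succ_le fun m _ hw => by
    simp only [finitePathSet, Set.mem_ofPred_eq, lastLetters_succ] at hw ⊢
    exact resImage_append_subset hN _ _ hw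

theorem one_mem_resImage [Nonempty X] (hN : S.IsNucleus N) (u : List X) :
    1 ∈ S.resImage N u :=
  Finset.mem_image.2 ⟨1, hN.one_mem, S.resW_one _⟩

variable (S N) in
/-- The measure number `meas(Γ_N)`, as a minimum over finite words. -/
noncomputable def measNumber : ℕ :=
  sInf (Set.range fun u : List X => (S.resImage N u).card)

theorem measNumber_le_card (u : List X) : S.measNumber N ≤ (S.resImage N u).card :=
  Nat.sInf_le ⟨u, rfl⟩

theorem exists_card_resImage_eq_measNumber :
    ∃ u : List X, (S.resImage N u).card = S.measNumber N :=
  Nat.sInf_mem (Set.range_nonempty _)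

theorem measNumber_pos [Nonempty X] (hN : S.IsNucleus N) : 0 < S.measNumber N := by
  obtain ⟨u, hu⟩ := exists_card_resImage_eq_measNumber (S := S) (N := N)
  exact hu ▸ Finset.card_pos.2 ⟨1, one_mem_resImage hN u⟩

theorem card_resImage_append_of_left (hN : S.IsNucleus N) {u : List X}
    (hu : (S.resImage N u).card = S.measNumber N) (v : List X) :
    (S.resImage N (u ++ v)).card = S.measNumber N :=
  le_antisymm (hu ▸ Finset.card_le_card (resImage_append_subset hN u v)) (measNumber_le_card _)

theorem card_resImage_append_of_right {v : List X}
    (hv : (S.resImage N v).card = S.measNumber N) (u : List X) :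
    (S.resImage N (u ++ v)).card = S.measNumber N :=
  le_antisymm (hv ▸ resImage_append (S := S) u v ▸ Finset.card_image_le) (measNumber_le_card _)

theorem exists_resW_eq_one_of_forall (hN : S.IsNucleus N)
    (hosc : ∀ g ∈ N, ∃ v : List X, S.resW g v = 1) :
    ∃ u : List X, ∀ g ∈ N, S.resW g u = 1 := by
  suffices ∀ s ⊆ N, ∃ u : List X, ∀ g ∈ s, S.resW g u = 1 from this N subset_rfl
  intro s
  induction s using Finset.induction_on with
  | empty => exact fun _ => ⟨[], nofun⟩
  | insert g s _ ih =>
    intro hs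
    obtain ⟨u, hu⟩ := ih ((Finset.subset_insert g s).trans hs)
    obtain ⟨v, hv⟩ := hosc _ (hN.resW_mem (hs (Finset.mem_insert_self g s)) u)
    refine ⟨u ++ v, fun g' hg' => ?_⟩
    rw [S.resW_append]
    rcases Finset.mem_insert.1 hg' with rfl | hg'
    · exact hv
    · rw [hu g' hg', S.resW_one]

theorem measNumber_eq_one_iff [Nonempty X] (hN : S.IsNucleus N) :
    S.measNumber N = 1 ↔ ∀ g ∈ N, ∃ v : List X, S.resW g v = 1 := by
  constructor
  · intro h1 g hg
    obtain ⟨u, hu⟩ := exists_card_resImage_eq_measNumber (S := S) (N := N)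
    obtain ⟨z, hz⟩ := Finset.card_eq_one.1 (hu.trans h1)
    have h1z : (1 : G) = z := Finset.mem_singleton.1 (hz ▸ one_mem_resImage hN u)
    exact ⟨u.reverse, h1z ▸ Finset.mem_singleton.1 (hz ▸ Finset.mem_image_of_mem _ hg)⟩
  · intro hosc
    obtain ⟨u, hu⟩ := exists_resW_eq_one_of_forall hN hosc
    have hsub : S.resImage N u.reverse ⊆ {1} := fun _ hg => by
      obtain ⟨g, hgN, rfl⟩ := Finset.mem_image.1 hg
      simpa [List.reverse_reverse] using hu g hgN
    exact le_antisymm ((measNumber_le_card _).trans (Finset.card_le_card hsub))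
      (measNumber_pos hN)

section Counting

variable [Fintype X]

variable (S N) in
noncomputable def badWords (m : ℕ) : Finset (Fin m → X) :=
  Finset.univ.filter fun v => S.measNumber N < (S.resImage N (List.ofFn v)).card

theorem sum_card_resImage_eq (hN : S.IsNucleus N) (m : ℕ) :
    ∑ h ∈ N, (Finset.univ.filter fun v : Fin m → X => h ∈ S.resImage N (List.ofFn v)).card =
      ∑ v : Fin m → X, (S.resImage N (List.ofFn v)).card := by
  simp only [Finset.card_filter]
  rw [Finset.sum_comm]
  refine Finset.sum_congr rfl fun v _ => ?_
  rw [← Finset.card_filter, Finset.filter_mem_eq_inter,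
    Finset.inter_eq_right.2 (resImage_subset hN _)]

theorem measNumber_mul_le_sum_card (m : ℕ) :
    S.measNumber N * Fintype.card X ^ m ≤ ∑ v : Fin m → X, (S.resImage N (List.ofFn v)).card := by
  calc S.measNumber N * Fintype.card X ^ m = ∑ _v : Fin m → X, S.measNumber N := by simp [mul_comm]
    _ ≤ _ := Finset.sum_le_sum fun v _ => measNumber_le_card _

theorem sum_card_le_measNumber_add (hN : S.IsNucleus N) (m : ℕ) :
    ∑ v : Fin m → X, (S.resImage N (List.ofFn v)).card ≤
      S.measNumber N * Fintype.card X ^ m + N.card * (S.badWords N m).card := by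
  classical
  calc ∑ v : Fin m → X, (S.resImage N (List.ofFn v)).card
      ≤ ∑ v : Fin m → X, (S.measNumber N + if v ∈ S.badWords N m then N.card else 0) := by
        refine Finset.sum_le_sum fun v _ => ?_
        split_ifs with hv
        · exact (Finset.card_le_card (resImage_subset hN _)).trans (Nat.le_add_left _ _)
        · simpa [badWords] using hv
    _ = _ := by
        rw [Finset.sum_add_distrib, ← Finset.sum_filter, Finset.filter_mem_eq_inter,
          Finset.univ_inter]
        simp [mul_comm]

/-- A word of length `m + ms` is bad only if its last `m` letters form a bad word and its first
`ms` letters differ from a word `b` realizing `meas(Γ_N)`. -/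
theorem card_badWords_add_le (hN : S.IsNucleus N) {ms : ℕ} (b : Fin ms → X)
    (hb : (S.resImage N (List.ofFn b)).card = S.measNumber N) (m : ℕ) :
    (S.badWords N (m + ms)).card ≤ (S.badWords N m).card * (Fintype.card X ^ ms - 1) := by
  classical
  calc (S.badWords N (m + ms)).card ≤ (S.badWords N m ×ˢ Finset.univ.erase b).card := by
        refine Finset.card_le_card_of_injOn (Fin.appendEquiv m ms).symm (fun v hv => ?_)
          (Fin.appendEquiv m ms).symm.injective.injOn
        obtain ⟨⟨a, b'⟩, rfl⟩ := (Fin.appendEquiv m ms).surjective v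
        simp only [badWords, Finset.coe_filter, Set.mem_ofPred_eq, Finset.mem_univ, true_and,
          Fin.appendEquiv, Equiv.coe_fn_mk, List.ofFn_fin_append] at hv
        simp only [Equiv.symm_apply_apply, Finset.coe_product, Set.mem_prod, Finset.mem_coe,
          badWords, Finset.mem_filter, Finset.mem_univ, true_and, Finset.mem_erase, and_true]
        constructor
        · by_contra ha
          exact hv.ne' (card_resImage_append_of_left hN
            (le_antisymm (not_lt.1 ha) (measNumber_le_card _)) _)
        · rintro rfl
          exact hv.ne' (card_resImage_append_of_right hb _)
    _ = (S.badWords N m).card * (Fintype.card X ^ ms - 1) := by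
        rw [Finset.card_product, Finset.card_erase_of_mem (Finset.mem_univ b), Finset.card_univ,
          Fintype.card_fun, Fintype.card_fin]

theorem card_badWords_mul_le (hN : S.IsNucleus N) {ms : ℕ} (b : Fin ms → X)
    (hb : (S.resImage N (List.ofFn b)).card = S.measNumber N) (k : ℕ) :
    (S.badWords N (ms * k)).card ≤ (Fintype.card X ^ ms - 1) ^ k := by
  induction k with
  | zero => simpa using Finset.card_le_univ (S.badWords N 0)
  | succ k ih =>
    calc (S.badWords N (ms * k + ms)).card
        ≤ (S.badWords N (ms * k)).card * (Fintype.card X ^ ms - 1) :=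
          card_badWords_add_le hN b hb _
      _ ≤ (Fintype.card X ^ ms - 1) ^ (k + 1) := by
          rw [pow_succ]; exact Nat.mul_le_mul_right _ ih

end Counting

section Measure

variable [Fintype X] [MeasurableSpace X] [MeasurableSingletonClass X] {μ0 : Measure (ℕ → X)}

theorem measurableSet_finitePathSet (h : G) (m : ℕ) : MeasurableSet (S.finitePathSet N h m) :=
  (Set.toFinite {v : Fin m → X | h ∈ S.resImage N (List.ofFn v)}).measurableSet.preimage
    (by fun_prop : Measurable fun (w : ℕ → X) (i : Fin m) => w i)

theorem measurableSet_pathSet (hN : S.IsNucleus N) (h : G) : MeasurableSet (S.pathSet N h) := by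
  rw [pathSet_eq_iInter hN]
  exact .iInter fun m => measurableSet_finitePathSet h m

theorem sum_measure_finitePathSet (hN : S.IsNucleus N)
    (hμ0 : ∀ u : List X, μ0 (Cyl u) = ((Fintype.card X : ℝ≥0∞))⁻¹ ^ u.length) (m : ℕ) :
    ∑ h ∈ N, μ0 (S.finitePathSet N h m) =
      (∑ v : Fin m → X, (S.resImage N (List.ofFn v)).card : ℕ) *
        (Fintype.card X : ℝ≥0∞)⁻¹ ^ m := by
  classical
  have hpre : ∀ h, S.finitePathSet N h m = (fun (w : ℕ → X) (i : Fin m) => w i) ⁻¹'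
      ↑(Finset.univ.filter fun v : Fin m → X => h ∈ S.resImage N (List.ofFn v)) := fun h => by
    ext w
    simp [finitePathSet, lastLetters]
  simp_rw [hpre, measure_preimage_restrict_finset hμ0, ← Finset.sum_mul, ← Nat.cast_sum,
    sum_card_resImage_eq hN]

theorem measNumber_le_sum_measure_finitePathSet [Nonempty X] (hN : S.IsNucleus N)
    (hμ0 : ∀ u : List X, μ0 (Cyl u) = ((Fintype.card X : ℝ≥0∞))⁻¹ ^ u.length) (m : ℕ) :
    (S.measNumber N : ℝ≥0∞) ≤ ∑ h ∈ N, μ0 (S.finitePathSet N h m) := by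
  have hn : (Fintype.card X : ℝ≥0∞) * (Fintype.card X : ℝ≥0∞)⁻¹ = 1 :=
    ENNReal.mul_inv_cancel (by simp) (by simp)
  rw [sum_measure_finitePathSet hN hμ0]
  calc (S.measNumber N : ℝ≥0∞)
      = ((S.measNumber N * Fintype.card X ^ m : ℕ) : ℝ≥0∞) * (Fintype.card X : ℝ≥0∞)⁻¹ ^ m := by
        push_cast
        rw [mul_assoc, ← mul_pow, hn, one_pow, mul_one]
    _ ≤ _ := by gcongr; exact measNumber_mul_le_sum_card m

theorem sum_measure_finitePathSet_le [Nonempty X] (hN : S.IsNucleus N)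
    (hμ0 : ∀ u : List X, μ0 (Cyl u) = ((Fintype.card X : ℝ≥0∞))⁻¹ ^ u.length) {ms : ℕ}
    (b : Fin ms → X) (hb : (S.resImage N (List.ofFn b)).card = S.measNumber N) (k : ℕ) :
    ∑ h ∈ N, μ0 (S.finitePathSet N h (ms * k)) ≤ S.measNumber N +
      N.card * (((Fintype.card X ^ ms - 1 : ℕ) : ℝ≥0∞) * (Fintype.card X : ℝ≥0∞)⁻¹ ^ ms) ^ k := by
  have hn : (Fintype.card X : ℝ≥0∞) * (Fintype.card X : ℝ≥0∞)⁻¹ = 1 :=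
    ENNReal.mul_inv_cancel (by simp) (by simp)
  rw [sum_measure_finitePathSet hN hμ0]
  calc _ ≤ ((S.measNumber N * Fintype.card X ^ (ms * k) +
          N.card * (Fintype.card X ^ ms - 1) ^ k : ℕ) : ℝ≥0∞) *
          (Fintype.card X : ℝ≥0∞)⁻¹ ^ (ms * k) := by
        gcongr
        exact (sum_card_le_measNumber_add hN _).trans
          (by gcongr; exact card_badWords_mul_le hN b hb k)
    _ = S.measNumber N * ((Fintype.card X : ℝ≥0∞) * (Fintype.card X : ℝ≥0∞)⁻¹) ^ (ms * k) +
          N.card * (((Fintype.card X ^ ms - 1 : ℕ) : ℝ≥0∞) *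
            (Fintype.card X : ℝ≥0∞)⁻¹ ^ ms) ^ k := by
        push_cast
        ring
    _ = _ := by rw [hn, one_pow, mul_one]

theorem sum_measure_pathSet [Nonempty X] (hN : S.IsNucleus N) [IsFiniteMeasure μ0]
    (hμ0 : ∀ u : List X, μ0 (Cyl u) = ((Fintype.card X : ℝ≥0∞))⁻¹ ^ u.length) :
    ∑ h ∈ N, μ0 (S.pathSet N h) = S.measNumber N := by
  have hle : ∀ m, ∑ h ∈ N, μ0 (S.pathSet N h) ≤ ∑ h ∈ N, μ0 (S.finitePathSet N h m) :=
    fun m => Finset.sum_le_sum fun h _ =>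
      measure_mono (pathSet_eq_iInter hN h ▸ Set.iInter_subset _ m)
  have hlim : Tendsto (fun m => ∑ h ∈ N, μ0 (S.finitePathSet N h m)) atTop
      (𝓝 (∑ h ∈ N, μ0 (S.pathSet N h))) :=
    tendsto_finsetSum _ fun h _ => by
      rw [pathSet_eq_iInter hN]
      exact tendsto_measure_iInter_atTop
        (fun m => (measurableSet_finitePathSet h m).nullMeasurableSet)
        (finitePathSet_antitone hN h) ⟨0, measure_ne_top _ _⟩
  refine le_antisymm ?_ (ge_of_tendsto' hlim (measNumber_le_sum_measure_finitePathSet hN hμ0))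
  obtain ⟨u, hu⟩ := exists_card_resImage_eq_measNumber (S := S) (N := N)
  rw [← List.ofFn_get u] at hu
  have hρ : ((Fintype.card X ^ u.length - 1 : ℕ) : ℝ≥0∞) *
      (Fintype.card X : ℝ≥0∞)⁻¹ ^ u.length < 1 := by
    rw [← ENNReal.inv_pow, ← div_eq_mul_inv, ENNReal.div_lt_iff (by simp) (by simp), one_mul]
    exact_mod_cast Nat.sub_lt (pow_pos Fintype.card_pos _) one_pos
  have hdecay := (ENNReal.Tendsto.const_mul (ENNReal.tendsto_pow_atTop_nhds_zero_of_lt_one hρ)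
    (Or.inr (natCast_ne_top N.card))).const_add (S.measNumber N : ℝ≥0∞)
  rw [mul_zero, add_zero] at hdecay
  exact ge_of_tendsto' hdecay fun k => (hle _).trans (sum_measure_finitePathSet_le hN hμ0 _ hu k)

end Measure

end DecidableEq

end SSA

/-- The measure of the tile `𝒯` equals the measure number of the nucleus graph `Γ_N`
(the sum over `g ∈ N` of the uniform Bernoulli measures of the sets `F_g` of left-infinite
sequences ending at the vertex `g` of `Γ_N`); in particular `μ(𝒯)` is a positive integer, and
`μ(𝒯) = 1` iff the action satisfies the open set condition. -/
theorem stmt_13 {G X : Type*} [Group G] [Fintype X] [Nonempty X]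
    [MeasurableSpace X] [MeasurableSpace G] [MeasurableSingletonClass G] [Countable G]
    (S : SSA G X) (N : Finset G) (hN : S.IsNucleus N)
    (μ0 : Measure (ℕ → X))
    (hμ0 : ∀ u : List X, μ0 (Cyl u) = ((Fintype.card X : ℝ≥0∞))⁻¹ ^ u.length) :
    (S.limitMeasure N μ0 (S.Tile N []) =
      ∑ g ∈ N, μ0 {w : ℕ → X | ∃ q : ℕ → G, q 0 = g ∧ (∀ i, q i ∈ N) ∧
        ∀ i : ℕ, S.res (q (i + 1)) (w i) = q i}) ∧
    (∃ k : ℕ, 0 < k ∧ S.limitMeasure N μ0 (S.Tile N []) = k) ∧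
    (S.limitMeasure N μ0 (S.Tile N []) = 1 ↔ ∀ g ∈ N, ∃ v : List X, S.resW g v = 1) := by
  classical
  have : IsProbabilityMeasure μ0 := ⟨by simpa [Cyl] using hμ0 []⟩
  have : MeasurableSingletonClass X :=
    measurableSingletonClass_of_measure_le μ0 fun a => by simpa [Cyl] using (hμ0 [a]).le
  have htile := S.limitMeasure_tile hN μ0 (S.measurableSet_pathSet hN)
  have hsum := S.sum_measure_pathSet hN hμ0
  refine ⟨htile, ⟨_, S.measNumber_pos hN, htile.trans hsum⟩, ?_⟩
  rw [htile, hsum, Nat.cast_eq_one, S.measNumber_eq_one_iff hN]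
end
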